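/- arXiv:2412.02223 — 5 statements merged into one kernel-verified Lean document; each statement's English description precedes it below -/
import Mathlib

section
/- Let n ∈ ℕ, let E and F be Dedekind complete vector lattices, let T: E → F be a vector lattice homomorphism, and let f_1,…,f_n ∈ E. If φ: ℝ^n → ℝ is a sublinear map, then T(sup_{a ∈ ∂φ(0)} Σ_{i=1}^n a_i f_i) = sup_{a ∈ ∂φ(0)} Σ_{i=1}^n a_i T(f_i), where both suprema exist (the first in E, the second in F). -/
open scoped BigOperators

/-- A sublinear map on ℝⁿ. -/
def Sublinear {n : ℕ} (φ : EuclideanSpace ℝ (Fin n) → ℝ) : Prop :=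
  (∀ x y, φ (x + y) ≤ φ x + φ y) ∧ ∀ c : ℝ, 0 ≤ c → ∀ x, φ (c • x) = c * φ x

/-- The subdifferential of a sublinear map φ at 0. -/
def subdiff {n : ℕ} (φ : EuclideanSpace ℝ (Fin n) → ℝ) :
    Set (EuclideanSpace ℝ (Fin n)) :=
  {a | ∀ x, ∑ i, a i * x i ≤ φ x}

section Aux

lemma aux_coord_abs_le_norm {n : ℕ} (a : EuclideanSpace ℝ (Fin n)) (i : Fin n) :
    |a i| ≤ ‖a‖ := by
  rw [EuclideanSpace.norm_eq, ← Real.sqrt_sq_eq_abs]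
  apply Real.sqrt_le_sqrt
  have := Finset.single_le_sum (f := fun j => ‖a j‖ ^ 2) (fun j _ => by positivity)
    (Finset.mem_univ i)
  simpa [sq_abs] using this

lemma aux_sum_single {n : ℕ} (x : EuclideanSpace ℝ (Fin n)) :
    x = ∑ i, x i • EuclideanSpace.single i (1 : ℝ) := by
  have h := (EuclideanSpace.basisFun (Fin n) ℝ).toBasis.sum_repr x
  simp only [EuclideanSpace.basisFun_toBasis] at h
  conv_lhs => rw [← h]
  refine Finset.sum_congr rfl fun i _ => ?_
  rw [PiLp.basisFun_repr, PiLp.basisFun_apply]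

variable {E : Type*} [Lattice E] [AddCommGroup E] [Module ℝ E]
    [CovariantClass E E (· + ·) (· ≤ ·)] [PosSMulMono ℝ E]

lemma aux_smul_le_abs_smul (c : ℝ) (g : E) : c • g ≤ |c| • |g| := by
  rcases le_total 0 c with hc | hc
  · rw [abs_of_nonneg hc]
    exact smul_le_smul_of_nonneg_left (le_abs_self g) hc
  · rw [abs_of_nonpos hc, show c • g = (-c) • (-g) by rw [neg_smul, smul_neg, neg_neg]]
    exact smul_le_smul_of_nonneg_left (neg_le_abs g) (neg_nonneg.2 hc)

/-- In a Dedekind complete vector lattice, if `x ≤ ε • w` for every `ε > 0`,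
then `x ≤ 0`. -/
lemma aux_arch (hDC : ∀ S : Set E, S.Nonempty → BddAbove S → ∃ s, IsLUB S s)
    {x w : E} (hw : 0 ≤ w) (h : ∀ ε : ℝ, 0 < ε → x ≤ ε • w) : x ≤ 0 := by
  set y : E := x ⊔ 0 with hy
  have hy0 : 0 ≤ y := le_sup_right
  have hyn : ∀ m : ℕ, (m : ℝ) • y ≤ w := by
    intro m
    have hpos : (0 : ℝ) < (m : ℝ) + 1 := by positivity
    have h1 : y ≤ ((m : ℝ) + 1)⁻¹ • w := by
      refine sup_le (h _ (by positivity)) ?_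
      exact smul_nonneg (by positivity) hw
    have h2 : ((m : ℝ) + 1) • y ≤ w := by
      have := smul_le_smul_of_nonneg_left h1 hpos.le
      rwa [smul_smul, mul_inv_cancel₀ hpos.ne', one_smul] at this
    calc (m : ℝ) • y ≤ (m : ℝ) • y + y := le_add_of_nonneg_right hy0
      _ = ((m : ℝ) + 1) • y := by rw [add_smul, one_smul]
      _ ≤ w := h2
  set S : Set E := Set.range (fun m : ℕ => (m : ℝ) • y) with hS
  obtain ⟨c, hc⟩ := hDC S ⟨0, ⟨0, by simp⟩⟩ ⟨w, by rintro _ ⟨m, rfl⟩; exact hyn m⟩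
  have hub : c - y ∈ upperBounds S := by
    rintro _ ⟨m, rfl⟩
    have : ((m : ℝ) + 1) • y ∈ S := ⟨m + 1, by push_cast; ring_nf⟩
    have h3 : (m : ℝ) • y + y ≤ c := by
      have := hc.1 this
      rwa [add_smul, one_smul] at this
    exact le_sub_iff_add_le.2 h3
  have : c ≤ c - y := hc.2 hub
  have hy_le : y ≤ 0 := by
    have := sub_nonneg.2 this
    rw [sub_sub_cancel_left] at this
    exact neg_nonneg.1 this
  exact le_sup_left.trans hy_le

variable {F : Type*} [Lattice F] [AddCommGroup F] [Module ℝ F]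
    [CovariantClass F F (· + ·) (· ≤ ·)] [PosSMulMono ℝ F]

lemma aux_map_sup' {ι : Type*} (T : E →ₗ[ℝ] F) (hT : ∀ x y : E, T (x ⊔ y) = T x ⊔ T y)
    (s : Finset ι) (hs : s.Nonempty) (g : ι → E) :
    T (s.sup' hs g) = s.sup' hs (fun i => T (g i)) := by
  induction hs using Finset.Nonempty.cons_induction with
  | singleton a => simp
  | cons a s ha hs ih => rw [Finset.sup'_cons (H := hs), Finset.sup'_cons (H := hs), hT, ih]

end Aux

/-- If `E`, `F` are Dedekind complete vector lattices,
`T : E → F` is a vector lattice homomorphism, `f₁,…,fₙ ∈ E`, and `φ : ℝⁿ → ℝ`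
is sublinear, then `T (sup_{a ∈ ∂φ(0)} Σ aᵢ fᵢ) = sup_{a ∈ ∂φ(0)} Σ aᵢ T(fᵢ)`,
where both suprema exist. -/
theorem stmt3 {n : ℕ} {E F : Type*}
    [Lattice E] [AddCommGroup E] [Module ℝ E]
    [CovariantClass E E (· + ·) (· ≤ ·)] [PosSMulMono ℝ E]
    [Lattice F] [AddCommGroup F] [Module ℝ F]
    [CovariantClass F F (· + ·) (· ≤ ·)] [PosSMulMono ℝ F]
    (hDCE : ∀ S : Set E, S.Nonempty → BddAbove S → ∃ s, IsLUB S s)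
    (hDCF : ∀ S : Set F, S.Nonempty → BddAbove S → ∃ s, IsLUB S s)
    (T : E →ₗ[ℝ] F) (hT : ∀ x y : E, T (x ⊔ y) = T x ⊔ T y)
    (f : Fin n → E) (φ : EuclideanSpace ℝ (Fin n) → ℝ) (hφ : Sublinear φ) :
    ∃ s t, IsLUB {x : E | ∃ a ∈ subdiff φ, x = ∑ i, a i • f i} s ∧
      IsLUB {y : F | ∃ a ∈ subdiff φ, y = ∑ i, a i • T (f i)} t ∧
      T s = t := by
  classical
  letI : IsOrderedAddMonoid E :=
    { add_le_add_left := fun a b h c => add_le_add h le_rfl }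
  letI : IsOrderedAddMonoid F :=
    { add_le_add_left := fun a b h c => add_le_add h le_rfl }
  obtain ⟨hadd, hhom⟩ := hφ
  -- T is monotone
  have Tmono : Monotone T := by
    intro x y hxy
    have : T y = T x ⊔ T y := by rw [← hT, sup_eq_right.2 hxy]
    rw [this]; exact le_sup_left
  have hφ0 : φ 0 = 0 := by simpa using hhom 0 le_rfl 0
  -- the subdifferential is nonempty
  obtain ⟨g, -, hg⟩ := exists_extension_of_le_sublinear ⟨⊥, 0⟩ φ
    (fun c hc x => hhom c hc.le x) hadd
    (by rintro ⟨x, hx⟩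
        rcases (Submodule.mem_bot ℝ).1 hx with rfl
        simp [hφ0])
  -- every `a ∈ subdiff φ` represents the linear functional `x ↦ ∑ aᵢ xᵢ`;
  -- conversely, the coordinates of `g` give an element of the subdifferential
  set a0 : EuclideanSpace ℝ (Fin n) := WithLp.toLp 2 (fun i => g (EuclideanSpace.single i 1)) with ha0
  have ha0mem : a0 ∈ subdiff φ := by
    intro x
    have hx : g x = ∑ i, a0 i * x i := by
      conv_lhs => rw [aux_sum_single x]
      rw [map_sum]
      exact Finset.sum_congr rfl fun i _ => by rw [map_smul, smul_eq_mul, mul_comm, ha0]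
    rw [← hx]; exact hg x
  -- coordinate bounds on the subdifferential
  set M : Fin n → ℝ := fun i =>
    max (φ (EuclideanSpace.single i 1)) (φ (EuclideanSpace.single i (-1))) with hM
  have hcoord : ∀ a ∈ subdiff φ, ∀ i, |a i| ≤ M i := by
    intro a ha i
    have h1 : a i ≤ φ (EuclideanSpace.single i 1) := by
      have := ha (EuclideanSpace.single i 1)
      simpa [EuclideanSpace.single_apply] using this
    have h2 : -a i ≤ φ (EuclideanSpace.single i (-1)) := by
      have := ha (EuclideanSpace.single i (-1))
      simpa [EuclideanSpace.single_apply] using this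
    exact abs_le.2 ⟨by have := le_max_right (φ (EuclideanSpace.single i 1))
                        (φ (EuclideanSpace.single i (-1))); linarith,
                    h1.trans (le_max_left _ _)⟩
  have hM0 : ∀ i, 0 ≤ M i := fun i => (abs_nonneg (a0 i)).trans (hcoord a0 ha0mem i)
  -- the sets in question
  set A : Set E := {x : E | ∃ a ∈ subdiff φ, x = ∑ i, a i • f i} with hA
  set B : Set F := {y : F | ∃ a ∈ subdiff φ, y = ∑ i, a i • T (f i)} with hB
  -- A is nonempty and bounded above
  have hAne : A.Nonempty := ⟨∑ i, a0 i • f i, a0, ha0mem, rfl⟩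
  have hAbdd : BddAbove A := by
    refine ⟨∑ i, M i • |f i|, ?_⟩
    rintro _ ⟨a, ha, rfl⟩
    refine Finset.sum_le_sum fun i _ => ?_
    calc a i • f i ≤ |a i| • |f i| := aux_smul_le_abs_smul _ _
      _ ≤ M i • |f i| := by
          have : 0 ≤ (M i - |a i|) • |f i| :=
            smul_nonneg (sub_nonneg.2 (hcoord a ha i)) (abs_nonneg (f i))
          have := le_of_sub_nonneg (by rwa [sub_smul] at this)
          exact this
  obtain ⟨s, hsLUB⟩ := hDCE A hAne hAbdd
  -- `T s` is an upper bound of B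
  have hTub : T s ∈ upperBounds B := by
    rintro _ ⟨a, ha, rfl⟩
    have hx : (∑ i, a i • T (f i)) = T (∑ i, a i • f i) := by
      rw [map_sum]; exact Finset.sum_congr rfl fun i _ => (map_smul T _ _).symm
    rw [hx]
    exact Tmono (hsLUB.1 ⟨a, ha, rfl⟩)
  -- `u = ∑ |fᵢ|`
  set u : E := ∑ i, |f i| with hu
  have hu0 : 0 ≤ u := Finset.sum_nonneg fun i _ => abs_nonneg (f i)
  have hTu0 : 0 ≤ T u := by have := Tmono hu0; rwa [map_zero] at this
  -- total boundedness of the subdifferential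
  have hTB : TotallyBounded (subdiff φ) := by
    have hsub : subdiff φ ⊆ Metric.closedBall 0 (∑ i, M i) := by
      intro a ha
      rw [Metric.mem_closedBall, dist_zero_right]
      calc ‖a‖ = ‖∑ i, a i • EuclideanSpace.single i (1 : ℝ)‖ := by rw [← aux_sum_single]
        _ ≤ ∑ i, ‖a i • EuclideanSpace.single i (1 : ℝ)‖ := norm_sum_le _ _
        _ ≤ ∑ i, M i := Finset.sum_le_sum fun i _ => by
            rw [norm_smul, EuclideanSpace.norm_single]
            simpa using hcoord a ha i
    exact (isCompact_closedBall (0 : EuclideanSpace ℝ (Fin n)) _).totallyBounded.subset hsub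
  -- `T s` is the least upper bound of B
  have hTlub : IsLUB B (T s) := by
    refine ⟨hTub, fun w hw => ?_⟩
    have key : ∀ ε : ℝ, 0 < ε → T s - w ≤ ε • T u := by
      intro ε hε
      -- get a finite ε-net of the subdifferential inside itself
      obtain ⟨t, hts, htfin, htcov⟩ := totallyBounded_iff_subset.1 hTB
        {p | dist p.1 p.2 < ε} (Metric.dist_mem_uniformity hε)
      set tf : Finset (EuclideanSpace ℝ (Fin n)) := htfin.toFinset with htf
      have htne : tf.Nonempty := by
        obtain ⟨y, hy, -⟩ := Set.mem_iUnion₂.1 (htcov ha0mem)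
        exact ⟨y, htfin.mem_toFinset.2 hy⟩
      set s' : E := tf.sup' htne (fun a => ∑ i, a i • f i) with hs'
      -- s ≤ s' + ε • u
      have hle : s ≤ s' + ε • u := by
        refine hsLUB.2 ?_
        rintro _ ⟨a, ha, rfl⟩
        obtain ⟨y, hy, hdy⟩ := Set.mem_iUnion₂.1 (htcov ha)
        have hdy' : dist a y < ε := hdy
        have hterm : ∀ i, (a i - y i) • f i ≤ ε • |f i| := by
          intro i
          calc (a i - y i) • f i ≤ |a i - y i| • |f i| := aux_smul_le_abs_smul _ _
            _ ≤ ε • |f i| := by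
                have hco : |a i - y i| ≤ ε := by
                  have h1 : |(a - y) i| ≤ ‖a - y‖ := aux_coord_abs_le_norm (a - y) i
                  have h2 : (a - y) i = a i - y i := rfl
                  rw [h2] at h1
                  exact h1.trans (by rw [← dist_eq_norm]; exact hdy'.le)
                have : 0 ≤ (ε - |a i - y i|) • |f i| :=
                  smul_nonneg (sub_nonneg.2 hco) (abs_nonneg (f i))
                exact le_of_sub_nonneg (by rwa [sub_smul] at this)
        calc (∑ i, a i • f i)
            = (∑ i, y i • f i) + ∑ i, (a i - y i) • f i := by
              rw [← Finset.sum_add_distrib]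
              exact Finset.sum_congr rfl fun i _ => by rw [← add_smul]; ring_nf
          _ ≤ s' + ε • u := by
              refine add_le_add ?_ ?_
              · exact Finset.le_sup' (fun a => ∑ i, a i • f i) (htfin.mem_toFinset.2 hy)
              · rw [hu, Finset.smul_sum]
                exact Finset.sum_le_sum fun i _ => hterm i
      -- apply T
      have hTs' : T s' ≤ w := by
        rw [hs', aux_map_sup' T hT]
        refine Finset.sup'_le _ _ fun a ha => ?_
        have hmem : T (∑ i, a i • f i) ∈ B := by
          refine ⟨a, hts (htfin.mem_toFinset.1 ha), ?_⟩
          rw [map_sum]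
          exact Finset.sum_congr rfl fun i _ => map_smul T _ _
        exact hw hmem
      have h4 := Tmono hle
      rw [map_add, map_smul] at h4
      have h5 : T s ≤ w + ε • T u := h4.trans (add_le_add_left hTs' _)
      exact sub_le_iff_le_add'.2 h5
    exact sub_nonpos.1 (aux_arch hDCF hTu0 key)
  exact ⟨s, T s, hsLUB, hTlub, rfl⟩
end

section
/- Let n ∈ ℕ, let E and F be Dedekind complete vector lattices, let T: E → F be a vector lattice homomorphism, and let f_1,…,f_n ∈ E. If ψ: ℝ^n → ℝ is a superlinear map, then T(inf_{a ∈ ∂ψ(0)} Σ_{i=1}^n a_i f_i) = inf_{a ∈ ∂ψ(0)} Σ_{i=1}^n a_i T(f_i), where both infima exist (the first in E, the second in F). -/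
open scoped BigOperators

/-- A superlinear map on ℝⁿ: `ψ` is superlinear iff `-ψ` is sublinear. -/
def Superlinear {n : ℕ} (ψ : EuclideanSpace ℝ (Fin n) → ℝ) : Prop :=
  Sublinear (fun x => -ψ x)

/-- The superdifferential of a superlinear map ψ at 0. -/
def superdiff {n : ℕ} (ψ : EuclideanSpace ℝ (Fin n) → ℝ) :
    Set (EuclideanSpace ℝ (Fin n)) :=
  {a | ∀ x, ψ x ≤ ∑ i, a i * x i}

section Aux

variable {G : Type*} [Lattice G] [AddCommGroup G] [Module ℝ G]
    [CovariantClass G G (· + ·) (· ≤ ·)] [PosSMulMono ℝ G]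

/-- If `|c| ≤ M` then `c • x ≤ M • |x|` in an ordered vector lattice. -/
lemma aux_smul_le_abs {c M : ℝ} (h : |c| ≤ M) (x : G) : c • x ≤ M • |x| := by
  have key : ∀ d : ℝ, 0 ≤ d → d ≤ M → ∀ y : G, y ≤ |x| → d • y ≤ M • |x| := by
    intro d hd hdM y hy
    calc d • y ≤ d • |x| := smul_le_smul_of_nonneg_left hy hd
      _ ≤ M • |x| := by
        have h0 : (0 : G) ≤ (M - d) • |x| := smul_nonneg (by linarith) (abs_nonneg x)
        have he : (M - d) • |x| = M • |x| - d • |x| := sub_smul M d |x|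
        rw [he] at h0
        exact sub_nonneg.1 h0
  rcases le_total 0 c with hc | hc
  · exact key c hc ((le_abs_self c).trans h) x (le_abs_self x)
  · have : c • x = (-c) • (-x) := by rw [neg_smul_neg]
    rw [this]
    exact key (-c) (neg_nonneg.2 hc) ((neg_le_abs c).trans h) (-x) (neg_le_abs x)

lemma aux_neg_le_neg {x y : G} (h : x ≤ y) : -y ≤ -x := by
  calc -y = (-x + -y) + x := by abel
    _ ≤ (-x + -y) + y := add_le_add_right h _
    _ = -x := by abel

/-- If `|c| ≤ M` then `-(M • |x|) ≤ c • x`. -/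
lemma aux_neg_abs_smul_le {c M : ℝ} (h : |c| ≤ M) (x : G) : -(M • |x|) ≤ c • x := by
  have h1 : (-c) • x ≤ M • |x| := aux_smul_le_abs (by rwa [abs_neg]) x
  have h2 : -(M • |x|) ≤ -((-c) • x) := aux_neg_le_neg h1
  rwa [neg_smul, neg_neg] at h2

lemma aux_sum_le_sum {ι : Type*} {s : Finset ι} {f g : ι → G} (h : ∀ i ∈ s, f i ≤ g i) :
    ∑ i ∈ s, f i ≤ ∑ i ∈ s, g i := by
  classical
  induction s using Finset.induction_on with
  | empty => simp
  | @insert a s ha ih =>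
    rw [Finset.sum_insert ha, Finset.sum_insert ha]
    exact add_le_add (h a (Finset.mem_insert_self a s))
      (ih fun i hi => h i (Finset.mem_insert_of_mem hi))

lemma aux_sum_nonneg {ι : Type*} {s : Finset ι} {f : ι → G} (h : ∀ i ∈ s, 0 ≤ f i) :
    0 ≤ ∑ i ∈ s, f i := by
  simpa using aux_sum_le_sum (f := fun _ => (0 : G)) (g := f) h

/-- Dedekind complete vector lattices are Archimedean. -/
lemma aux_arch_s4 (hDC : ∀ S : Set G, S.Nonempty → BddBelow S → ∃ s, IsGLB S s)
    {b c d : G} (hd : 0 ≤ d) (h : ∀ ε : ℝ, 0 < ε → b ≤ c + ε • d) : b ≤ c := by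
  set u : G := (b - c) ⊔ 0 with hu
  have key : ∀ m : ℕ, (m : ℝ) • u ≤ d := by
    intro m
    rcases Nat.eq_zero_or_pos m with hm | hm
    · simpa [hm] using hd
    · have hm' : (0 : ℝ) < m := by exact_mod_cast hm
      have hε : (0 : ℝ) < 1 / m := by positivity
      have h1 : b - c ≤ (1 / (m : ℝ)) • d := sub_le_iff_le_add'.2 (h _ hε)
      have h2 : u ≤ (1 / (m : ℝ)) • d := sup_le h1 (smul_nonneg hε.le hd)
      have h3 : (m : ℝ) • u ≤ (m : ℝ) • ((1 / (m : ℝ)) • d) :=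
        smul_le_smul_of_nonneg_left h2 hm'.le
      rwa [smul_smul, mul_one_div, div_self hm'.ne', one_smul] at h3
  obtain ⟨w, hw⟩ := hDC (Set.range fun m : ℕ => -((m : ℝ) • u))
    ⟨_, 0, rfl⟩
    ⟨-d, by rintro x ⟨m, rfl⟩; exact aux_neg_le_neg (key m)⟩
  have hlb : w + u ∈ lowerBounds (Set.range fun m : ℕ => -((m : ℝ) • u)) := by
    rintro x ⟨m, rfl⟩
    have h1 : w ≤ -(((m + 1 : ℕ) : ℝ) • u) := hw.1 ⟨m + 1, rfl⟩
    have he : (((m + 1 : ℕ) : ℝ)) • u = (m : ℝ) • u + u := by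
      push_cast
      rw [add_smul, one_smul]
    rw [he, neg_add] at h1
    calc w + u ≤ (-((m : ℝ) • u) + -u) + u := add_le_add_left h1 u
      _ = -((m : ℝ) • u) := by abel
  have h1 : w + u ≤ w := hw.2 hlb
  have h2 : u ≤ 0 := by
    have := add_le_add_right h1 (-w)
    simpa [add_assoc, add_comm] using this
  have h3 : b - c ≤ 0 := le_trans le_sup_left h2
  exact sub_nonpos.1 h3

end Aux

/-- If `E`, `F` are Dedekind complete vector lattices,
`T : E → F` is a vector lattice homomorphism, `f₁,…,fₙ ∈ E`, and `ψ : ℝⁿ → ℝ`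
is superlinear, then `T (inf_{a ∈ ∂ψ(0)} Σ aᵢ fᵢ) = inf_{a ∈ ∂ψ(0)} Σ aᵢ T(fᵢ)`,
where both infima exist. -/
theorem stmt4 {n : ℕ} {E F : Type*}
    [Lattice E] [AddCommGroup E] [Module ℝ E]
    [CovariantClass E E (· + ·) (· ≤ ·)] [PosSMulMono ℝ E]
    [Lattice F] [AddCommGroup F] [Module ℝ F]
    [CovariantClass F F (· + ·) (· ≤ ·)] [PosSMulMono ℝ F]
    (hDCE : ∀ S : Set E, S.Nonempty → BddBelow S → ∃ s, IsGLB S s)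
    (hDCF : ∀ S : Set F, S.Nonempty → BddBelow S → ∃ s, IsGLB S s)
    (T : E →ₗ[ℝ] F) (hT : ∀ x y : E, T (x ⊔ y) = T x ⊔ T y)
    (f : Fin n → E) (ψ : EuclideanSpace ℝ (Fin n) → ℝ) (hψ : Superlinear ψ) :
    ∃ s t, IsGLB {x : E | ∃ a ∈ superdiff ψ, x = ∑ i, a i • f i} s ∧
      IsGLB {y : F | ∃ a ∈ superdiff ψ, y = ∑ i, a i • T (f i)} t ∧
      T s = t := by
  classical
  set K := superdiff ψ with hKdef
  set e : Fin n → EuclideanSpace ℝ (Fin n) := fun i => EuclideanSpace.single i (1 : ℝ) with he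
  -- basic facts about ψ
  have hψ0 : ψ 0 = 0 := by
    have h : -ψ 0 = 0 := by simpa using hψ.2 0 le_rfl 0
    linarith
  -- decomposition of vectors in the standard basis
  have hbasis : ∀ x : EuclideanSpace ℝ (Fin n), x = ∑ j, x j • e j := by
    intro x
    have h := (EuclideanSpace.basisFun (Fin n) ℝ).sum_repr x
    simp only [EuclideanSpace.basisFun_repr, EuclideanSpace.basisFun_apply] at h
    simp only [he]
    exact h.symm
  have hsum_single : ∀ (a : EuclideanSpace ℝ (Fin n)) (i : Fin n),
      ∑ j, a j * e i j = a i := by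
    intro a i
    simp [he, EuclideanSpace.single_apply]
  have hsum_single' : ∀ (a : EuclideanSpace ℝ (Fin n)) (i : Fin n),
      ∑ j, a j * (-e i : EuclideanSpace ℝ (Fin n)) j = -a i := by
    intro a i
    simp [he, EuclideanSpace.single_apply]
  -- K is nonempty
  have hKne : K.Nonempty := by
    obtain ⟨g, -, hg⟩ := exists_extension_of_le_sublinear
      ⟨⊥, 0⟩ (fun x => -ψ x)
      (fun c hc x => hψ.2 c hc.le x) hψ.1
      (fun x => by
        have hx0 : (x : EuclideanSpace ℝ (Fin n)) = 0 := (Submodule.mem_bot ℝ).1 x.2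
        simp [hx0, hψ0])
    refine ⟨(WithLp.toLp 2 (fun i => -g (e i) : Fin n → ℝ) : EuclideanSpace ℝ (Fin n)), fun x => ?_⟩
    have hgx : g x = ∑ i, x i * g (e i) := by
      conv_lhs => rw [hbasis x]
      rw [map_sum]
      simp [smul_eq_mul]
    have h1 : g x ≤ -ψ x := hg x
    have h2 : (∑ i, -g (e i) * x i) = -g x := by
      rw [hgx, ← Finset.sum_neg_distrib]
      congr 1
      ext i
      ring
    show ψ x ≤ ∑ i, -g (e i) * x i
    rw [h2]
    linarith
  -- uniform coordinate bound for elements of K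
  set M : ℝ := 1 + ∑ i, (|ψ (e i)| + |ψ (-e i)|) with hM
  have hterm_nonneg : ∀ i ∈ Finset.univ, (0:ℝ) ≤ |ψ (e i)| + |ψ (-e i)| := by
    intro i _
    positivity
  have hM0 : (0:ℝ) ≤ M := by
    have := Finset.sum_nonneg hterm_nonneg
    simp only [hM]
    linarith
  have hcoord : ∀ a ∈ K, ∀ i, |a i| ≤ M := by
    intro a ha i
    have h1 : ψ (e i) ≤ a i := by
      have := ha (e i)
      rwa [hsum_single a i] at this
    have h2 : ψ (-e i) ≤ -a i := by
      have := ha (-e i)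
      rwa [hsum_single' a i] at this
    have h3 : |ψ (e i)| + |ψ (-e i)| ≤ ∑ j, (|ψ (e j)| + |ψ (-e j)|) :=
      Finset.single_le_sum hterm_nonneg (Finset.mem_univ i)
    have h4 : -|ψ (e i)| ≤ ψ (e i) := neg_abs_le _
    have h5 : ψ (-e i) ≥ -|ψ (-e i)| := neg_abs_le _
    rw [abs_le]
    constructor
    · have := abs_nonneg (ψ (-e i))
      simp only [hM]; nlinarith [abs_nonneg (ψ (e i))]
    · have := abs_nonneg (ψ (e i))
      simp only [hM]; nlinarith [abs_nonneg (ψ (-e i)), le_abs_self (ψ (-e i)),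
        neg_le_abs (ψ (-e i))]
  -- T is monotone and preserves finite infima
  have Tmono : ∀ x y : E, x ≤ y → T x ≤ T y := by
    intro x y hxy
    have h1 : T y = T x ⊔ T y := by rw [← hT, sup_eq_right.mpr hxy]
    rw [h1]
    exact le_sup_left
  have Tinf : ∀ x y : E, T (x ⊓ y) = T x ⊓ T y := by
    intro x y
    have h1 : x ⊓ y = -(-x ⊔ -y) := by rw [neg_sup, neg_neg, neg_neg]
    rw [h1, map_neg, hT, map_neg, map_neg, neg_sup, neg_neg, neg_neg]
  -- the E-side set
  set SE : Set E := {x : E | ∃ a ∈ superdiff ψ, x = ∑ i, a i • f i} with hSE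
  set gE : E := ∑ i, |f i| with hgE
  have hSEne : SE.Nonempty := by
    obtain ⟨a0, ha0⟩ := hKne
    exact ⟨∑ i, a0 i • f i, a0, ha0, rfl⟩
  have hlowbdd : ∀ a ∈ K, -(M • gE) ≤ ∑ i, a i • f i := by
    intro a ha
    have h1 : ∀ i ∈ Finset.univ, -(M • |f i|) ≤ a i • f i := fun i _ =>
      aux_neg_abs_smul_le (hcoord a ha i) (f i)
    calc -(M • gE) = ∑ i, -(M • |f i|) := by
          rw [hgE, Finset.smul_sum, Finset.sum_neg_distrib]
      _ ≤ ∑ i, a i • f i := aux_sum_le_sum h1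
  have hSEbdd : BddBelow SE := by
    refine ⟨-(M • gE), ?_⟩
    rintro x ⟨a, ha, rfl⟩
    exact hlowbdd a ha
  obtain ⟨s, hs⟩ := hDCE SE hSEne hSEbdd
  -- K is compact
  have hKclosed : IsClosed K := by
    have hKeq : K = ⋂ x : EuclideanSpace ℝ (Fin n),
        {a : EuclideanSpace ℝ (Fin n) | ψ x ≤ ∑ i, a i * x i} := by
      ext a
      simp [hKdef, superdiff, Set.mem_iInter]
    rw [hKeq]
    exact isClosed_iInter fun x => isClosed_le continuous_const
      (continuous_finset_sum _ fun j _ =>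
        ((EuclideanSpace.proj (𝕜 := ℝ) j).continuous).mul continuous_const)
  have hKbdd : Bornology.IsBounded K := by
    refine (Metric.isBounded_closedBall (x := (0 : EuclideanSpace ℝ (Fin n))) (r := Real.sqrt (n * M ^ 2))).subset ?_
    intro a ha
    rw [Metric.mem_closedBall, dist_zero_right, EuclideanSpace.norm_eq]
    have h1 : ∑ i, ‖a i‖ ^ 2 ≤ ∑ _i : Fin n, M ^ 2 :=
      Finset.sum_le_sum fun i _ => by
        have hb : ‖a i‖ ≤ M := by rw [Real.norm_eq_abs]; exact hcoord a ha i
        exact pow_le_pow_left₀ (norm_nonneg _) hb 2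
    have h2 : (∑ _i : Fin n, M ^ 2) = (n : ℝ) * M ^ 2 := by
      rw [Finset.sum_const, Finset.card_univ, Fintype.card_fin, nsmul_eq_mul]
    exact Real.sqrt_le_sqrt (h1.trans_eq h2)
  have hKcompact : IsCompact K :=
    Metric.isCompact_of_isClosed_isBounded hKclosed hKbdd
  -- coordinatewise distance bound
  have hcd : ∀ (v w : EuclideanSpace ℝ (Fin n)) (i : Fin n), |v i - w i| ≤ dist v w := by
    intro v w i
    rw [EuclideanSpace.dist_eq, ← Real.dist_eq]
    exact (Real.sqrt_sq dist_nonneg).symm.trans_le <| Real.sqrt_le_sqrt <|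
      Finset.single_le_sum (f := fun j => dist (v j) (w j) ^ 2) (fun j _ => sq_nonneg _)
        (Finset.mem_univ i)
  -- main approximation step : any lower bound of the F-side set is ≤ T s
  have hTgE : (0 : F) ≤ T gE := by
    have h1 : (0 : E) ≤ gE := aux_sum_nonneg fun i _ => abs_nonneg (f i)
    have := Tmono 0 gE h1
    rwa [map_zero] at this
  set SF : Set F := {y : F | ∃ a ∈ superdiff ψ, y = ∑ i, a i • T (f i)} with hSF
  have hmain : ∀ b ∈ lowerBounds SF, b ≤ T s := by
    intro b hb
    refine aux_arch_s4 hDCF hTgE ?_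
    intro ε hε
    -- find a finite ε-net A ⊆ K
    obtain ⟨A, hAK, hAfin, hAcov⟩ := totallyBounded_iff_subset.1
      hKcompact.totallyBounded _ (Metric.dist_mem_uniformity hε)
    obtain ⟨a0, ha0⟩ := hKne
    obtain ⟨a1, ha1A, ha1d⟩ : ∃ y ∈ A, dist a0 y < ε := by
      have := hAcov ha0
      simpa using this
    set AF : Finset (EuclideanSpace ℝ (Fin n)) := hAfin.toFinset with hAF
    have hAne : AF.Nonempty := ⟨a1, hAfin.mem_toFinset.2 ha1A⟩
    set u : EuclideanSpace ℝ (Fin n) → E := fun a => ∑ i, a i • f i with hudef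
    set sA : E := AF.inf' hAne u with hsA
    -- b is below T sA
    have h1 : b ≤ T sA := by
      rw [hsA, Finset.apply_inf'_eq_inf'_comp hAne (f := u) T Tinf]
      refine Finset.le_inf' hAne _ ?_
      intro a' ha'
      have ha'K : a' ∈ K := hAK (hAfin.mem_toFinset.1 ha')
      have hval : (T ∘ u) a' = ∑ i, a' i • T (f i) := by
        simp only [Function.comp_apply, hudef, map_sum, map_smul]
      rw [hval]
      exact hb ⟨a', ha'K, rfl⟩
    -- sA - ε • gE is a lower bound of SE
    have h2 : sA ≤ s + ε • gE := by
      have hlow : sA - ε • gE ∈ lowerBounds SE := by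
        rintro x ⟨a, haK, rfl⟩
        obtain ⟨a', ha'A, ha'd⟩ : ∃ y ∈ A, dist a y < ε := by
          have := hAcov haK
          simpa using this
        have hin : a' ∈ AF := hAfin.mem_toFinset.2 ha'A
        have hstep : u a' ≤ u a + ε • gE := by
          have hdiff : u a' - u a = ∑ i, (a' i - a i) • f i := by
            simp only [hudef, ← Finset.sum_sub_distrib, sub_smul]
          have hbound : ∑ i, (a' i - a i) • f i ≤ ε • gE := by
            rw [hgE, Finset.smul_sum]
            refine aux_sum_le_sum fun i _ => ?_
            refine aux_smul_le_abs ?_ (f i)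
            have := hcd a' a i
            have hd : dist a' a < ε := by rwa [dist_comm]
            linarith
          have h4 : u a' - u a ≤ ε • gE := by rw [hdiff]; exact hbound
          have h5 := sub_le_iff_le_add.1 h4
          rwa [add_comm] at h5
        calc sA - ε • gE ≤ u a' - ε • gE := sub_le_sub_right (Finset.inf'_le _ hin) _
          _ ≤ (u a + ε • gE) - ε • gE := sub_le_sub_right hstep _
          _ = u a := by abel
      have := hs.2 hlow
      exact sub_le_iff_le_add.1 this
    have h3 : T sA ≤ T s + ε • T gE := by
      have := Tmono _ _ h2
      rwa [map_add, map_smul] at this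
    exact h1.trans h3
  -- conclude
  refine ⟨s, T s, hs, ⟨⟨?_, ?_⟩, rfl⟩⟩
  · rintro y ⟨a, haK, rfl⟩
    have h1 : s ≤ ∑ i, a i • f i := hs.1 ⟨a, haK, rfl⟩
    have h2 := Tmono _ _ h1
    simp only [map_sum, map_smul] at h2
    exact h2
  · exact hmain
end

section
/- Let n ∈ ℕ, let E and F be Archimedean vector lattices, let T: E → F be a vector lattice homomorphism, let f_1,…,f_n ∈ E, and let φ: ℝ^n → ℝ be a sublinear map. If the supremum s := sup_{a ∈ ∂φ(0)} Σ_{i=1}^n a_i f_i exists in E and the supremum t := sup_{a ∈ ∂φ(0)} Σ_{i=1}^n a_i T(f_i) exists in F, then T(s) = t. -/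
open scoped BigOperators

section Aux

variable {E : Type*} [Lattice E] [AddCommGroup E] [Module ℝ E]
    [CovariantClass E E (· + ·) (· ≤ ·)] [PosSMulMono ℝ E]

lemma aux_smul_nonneg {c : ℝ} {x : E} (hc : 0 ≤ c) (hx : 0 ≤ x) : 0 ≤ c • x := by
  have := smul_le_smul_of_nonneg_left hx hc
  simpa using this

lemma aux_smul_le_abs_s6 {c : ℝ} {x : E} {ε : ℝ} (hc : |c| ≤ ε) : c • x ≤ ε • |x| := by
  have h1 : c • x ≤ |c| • |x| := by
    rcases le_or_gt 0 c with h | h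
    · rw [abs_of_nonneg h]
      exact smul_le_smul_of_nonneg_left (le_abs_self x) h
    · rw [abs_of_neg h]
      calc c • x = (-c) • (-x) := by rw [neg_smul, smul_neg, neg_neg]
        _ ≤ (-c) • |x| := smul_le_smul_of_nonneg_left (neg_le_abs x) (by linarith)
  have h2 : |c| • |x| ≤ ε • |x| := by
    have h3 : (0:E) ≤ (ε - |c|) • |x| := aux_smul_nonneg (by linarith) (abs_nonneg x)
    rw [sub_smul] at h3
    exact sub_nonneg.mp h3
  exact h1.trans h2

/-- coordinate bound in Euclidean space -/
lemma aux_coord_le_dist {n : ℕ} (b a : EuclideanSpace ℝ (Fin n)) (i : Fin n) :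
    |b i - a i| ≤ dist b a := by
  rw [EuclideanSpace.dist_eq]
  have h1 : |b i - a i| = Real.sqrt (dist (b i) (a i) ^ 2) := by
    rw [Real.sqrt_sq (dist_nonneg)]
    rw [Real.dist_eq]
  rw [h1]
  apply Real.sqrt_le_sqrt
  exact Finset.single_le_sum (f := fun j => dist (b j) (a j) ^ 2)
    (fun j _ => sq_nonneg _) (Finset.mem_univ i)

/-- Assemble a local `OrderedAddCommGroup` structure from the given classes. -/
def auxOACG (E : Type*) [Lattice E] [AddCommGroup E]
    [CovariantClass E E (· + ·) (· ≤ ·)] : IsOrderedAddMonoid E :=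
  { add_le_add_left := fun a b h c => by
      have := (CovariantClass.elim c h : c + a ≤ c + b)
      rwa [add_comm c, add_comm c] at this }

end Aux

/-- If `E`, `F` are Archimedean vector lattices, `T : E → F` is a
vector lattice homomorphism, `f₁,…,fₙ ∈ E`, `φ : ℝⁿ → ℝ` is sublinear, and the
suprema `s = sup_{a ∈ ∂φ(0)} Σ aᵢ fᵢ` (in `E`) and
`t = sup_{a ∈ ∂φ(0)} Σ aᵢ T(fᵢ)` (in `F`) exist, then `T s = t`. -/
theorem stmt6 {n : ℕ} {E F : Type*}
    [Lattice E] [AddCommGroup E] [Module ℝ E]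
    [CovariantClass E E (· + ·) (· ≤ ·)] [PosSMulMono ℝ E]
    [Lattice F] [AddCommGroup F] [Module ℝ F]
    [CovariantClass F F (· + ·) (· ≤ ·)] [PosSMulMono ℝ F]
    (hArchE : ∀ x y : E, 0 ≤ x → 0 ≤ y → (∀ k : ℕ, k • x ≤ y) → x = 0)
    (hArchF : ∀ x y : F, 0 ≤ x → 0 ≤ y → (∀ k : ℕ, k • x ≤ y) → x = 0)
    (T : E →ₗ[ℝ] F) (hT : ∀ x y : E, T (x ⊔ y) = T x ⊔ T y)
    (f : Fin n → E) (φ : EuclideanSpace ℝ (Fin n) → ℝ) (hφ : Sublinear φ)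
    (s : E) (hs : IsLUB {x : E | ∃ a ∈ subdiff φ, x = ∑ i, a i • f i} s)
    (t : F) (ht : IsLUB {y : F | ∃ a ∈ subdiff φ, y = ∑ i, a i • T (f i)} t) :
    T s = t := by
  letI := auxOACG E
  letI := auxOACG F
  have hTmono : Monotone T := by
    intro x y hxy
    have h := hT x y
    rw [sup_eq_right.mpr hxy] at h
    rw [h]
    exact le_sup_left
  have hTsum : ∀ a : EuclideanSpace ℝ (Fin n),
      T (∑ i, a i • f i) = ∑ i, a i • T (f i) := by
    intro a
    rw [map_sum]
    simp [map_smul]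
  -- easy direction : t ≤ T s
  have htTs : t ≤ T s := by
    apply ht.2
    rintro y ⟨a, ha, rfl⟩
    rw [← hTsum a]
    exact hTmono (hs.1 ⟨a, ha, rfl⟩)
  by_cases hne : (subdiff φ).Nonempty
  · -- main case
    set u : E := ∑ i, |f i| with hu_def
    have hu : (0:E) ≤ u := by
      rw [hu_def]
      exact Finset.sum_nonneg fun i _ => abs_nonneg (f i)
    have hTpos : ∀ x : E, 0 ≤ x → 0 ≤ T x := by
      intro x hx
      have h := hT x 0
      rw [sup_eq_left.mpr hx, map_zero] at h
      rw [h]; exact le_sup_right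
    -- main estimate
    have hmain : ∀ ε : ℝ, 0 < ε → T s ≤ t + ε • T u := by
      intro ε hε
      -- total boundedness of subdiff
      obtain ⟨C, hC⟩ : ∃ C : ℝ, ∀ a ∈ subdiff φ, ‖a‖ ≤ C := by
        refine ⟨Real.sqrt (∑ i, (max (φ (EuclideanSpace.single i 1))
          (φ (EuclideanSpace.single i (-1)))) ^ 2), fun a ha => ?_⟩
        rw [EuclideanSpace.norm_eq]
        apply Real.sqrt_le_sqrt
        apply Finset.sum_le_sum
        intro i _
        have h1 : a i ≤ φ (EuclideanSpace.single i 1) := by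
          have := ha (EuclideanSpace.single i 1)
          simpa [EuclideanSpace.single_apply, Finset.sum_ite_eq] using this
        have h2 : -(a i) ≤ φ (EuclideanSpace.single i (-1)) := by
          have := ha (EuclideanSpace.single i (-1))
          simpa [EuclideanSpace.single_apply, Finset.sum_ite_eq] using this
        have habs : |a i| ≤ max (φ (EuclideanSpace.single i 1))
            (φ (EuclideanSpace.single i (-1))) := by
          rcases abs_cases (a i) with ⟨he, _⟩ | ⟨he, _⟩
          · rw [he]; exact h1.trans (le_max_left _ _)
          · rw [he]; exact h2.trans (le_max_right _ _)
        calc ‖a i‖ ^ 2 = |a i| ^ 2 := by rw [Real.norm_eq_abs]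
          _ ≤ _ := pow_le_pow_left₀ (abs_nonneg _) habs 2
      have htb : TotallyBounded (subdiff φ) := by
        have hsub : subdiff φ ⊆ Metric.closedBall 0 C := by
          intro a ha
          rw [Metric.mem_closedBall, dist_zero_right]
          exact hC a ha
        exact TotallyBounded.subset hsub (isCompact_closedBall 0 C).totallyBounded
      obtain ⟨N, hNsub, hNfin, hNcov⟩ :=
        totallyBounded_iff_subset.mp htb {p | dist p.1 p.2 < ε} (Metric.dist_mem_uniformity hε)
      -- N is nonempty
      obtain ⟨b0, hb0⟩ := hne
      have hNne : N.Nonempty := by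
        obtain ⟨a, haN, -⟩ := Set.mem_iUnion₂.mp (hNcov hb0)
        exact ⟨a, haN⟩
      set A : Finset (EuclideanSpace ℝ (Fin n)) := hNfin.toFinset with hA_def
      have hAne : A.Nonempty := by
        obtain ⟨a, haN⟩ := hNne
        exact ⟨a, hNfin.mem_toFinset.mpr haN⟩
      set m : E := A.sup' hAne (fun a => ∑ i, a i • f i) with hm_def
      -- s ≤ m + ε • u
      have hsm : s ≤ m + ε • u := by
        apply hs.2
        rintro x ⟨b, hb, rfl⟩
        obtain ⟨a, haN, hdist⟩ := Set.mem_iUnion₂.mp (hNcov hb)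
        have hdist' : dist b a < ε := hdist
        have hstep : ∑ i, b i • f i ≤ (∑ i, a i • f i) + ε • u := by
          have hdiff : ∑ i, b i • f i = (∑ i, a i • f i) + ∑ i, (b i - a i) • f i := by
            rw [← Finset.sum_add_distrib]
            congr 1; ext i
            rw [← add_smul]; ring_nf
          rw [hdiff]
          apply add_le_add_right
          calc ∑ i, (b i - a i) • f i ≤ ∑ i, ε • |f i| := by
                apply Finset.sum_le_sum
                intro i _
                apply aux_smul_le_abs_s6
                exact (aux_coord_le_dist b a i).trans hdist'.le
            _ = ε • u := by rw [hu_def, Finset.smul_sum]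
        have hle_m : ∑ i, a i • f i ≤ m :=
          Finset.le_sup' (fun a => ∑ i, a i • f i) (hNfin.mem_toFinset.mpr haN)
        calc ∑ i, b i • f i ≤ (∑ i, a i • f i) + ε • u := hstep
          _ ≤ m + ε • u := add_le_add_left hle_m _
      -- T m ≤ t
      have hTm : T m ≤ t := by
        have hcomp : T m = A.sup' hAne (fun a => T (∑ i, a i • f i)) := by
          exact Finset.comp_sup'_eq_sup'_comp hAne (f := fun a => ∑ i, a i • f i) T hT
        rw [hcomp]
        apply Finset.sup'_le
        intro a haA
        rw [hTsum a]
        exact ht.1 ⟨a, hNsub (hNfin.mem_toFinset.mp haA), rfl⟩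
      calc T s ≤ T (m + ε • u) := hTmono hsm
        _ = T m + ε • T u := by rw [map_add, map_smul]
        _ ≤ t + ε • T u := add_le_add_left hTm _
    -- Archimedean conclusion
    have hw : T s - t = 0 := by
      apply hArchF (T s - t) (T u) (sub_nonneg.mpr htTs) (hTpos u hu)
      intro k
      rcases Nat.eq_zero_or_pos k with hk | hk
      · rw [hk, zero_smul]
        exact hTpos u hu
      · have hkpos : (0:ℝ) < k := Nat.cast_pos.mpr hk
        have h1 : T s ≤ t + (1 / (k:ℝ)) • T u := hmain _ (by positivity)
        have h2 : T s - t ≤ (1 / (k:ℝ)) • T u := by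
          rw [sub_le_iff_le_add, add_comm]; exact h1
        have h3 : (k:ℝ) • (T s - t) ≤ (k:ℝ) • ((1 / (k:ℝ)) • T u) :=
          smul_le_smul_of_nonneg_left h2 hkpos.le
        have h4 : (k:ℝ) • ((1 / (k:ℝ)) • T u) = T u := by
          rw [smul_smul, mul_one_div, div_self hkpos.ne', one_smul]
        rw [h4] at h3
        rwa [← Nat.cast_smul_eq_nsmul ℝ k (T s - t)]
    exact sub_eq_zero.mp hw
  · -- empty case : both sets are empty, s = t = 0
    have hSempty : {x : E | ∃ a ∈ subdiff φ, x = ∑ i, a i • f i} = ∅ := by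
      ext x
      simp only [Set.mem_setOf_eq, Set.mem_empty_iff_false, iff_false]
      rintro ⟨a, ha, -⟩
      exact hne ⟨a, ha⟩
    have hTempty : {y : F | ∃ a ∈ subdiff φ, y = ∑ i, a i • T (f i)} = ∅ := by
      ext y
      simp only [Set.mem_setOf_eq, Set.mem_empty_iff_false, iff_false]
      rintro ⟨a, ha, -⟩
      exact hne ⟨a, ha⟩
    rw [hSempty] at hs
    rw [hTempty] at ht
    have hsbot : ∀ y : E, s ≤ y := fun y => hs.2 (by simp)
    have htbot : ∀ y : F, t ≤ y := fun y => ht.2 (by simp)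
    have hs0 : s = 0 := by
      have h1 : s ≤ 0 := hsbot 0
      have h2 : s ≤ s + s := hsbot (s + s)
      have h3 : (0:E) ≤ s := (le_add_iff_nonneg_right s).mp h2
      exact le_antisymm h1 h3
    have ht0 : t = 0 := by
      have h1 : t ≤ 0 := htbot 0
      have h2 : t ≤ t + t := htbot (t + t)
      have h3 : (0:F) ≤ t := (le_add_iff_nonneg_right t).mp h2
      exact le_antisymm h1 h3
    rw [hs0, ht0, map_zero]
end

section
/- Let n ∈ ℕ, let E be an Archimedean vector lattice, let E_0 be a vector sublattice of E, let f_1,…,f_n ∈ E_0, and let φ: ℝ^n → ℝ be a sublinear map. If the supremum of the set S := { Σ_{i=1}^n a_i f_i : a ∈ ∂φ(0) } exists in E_0 (with the supremum taken in the ordered set E_0), then the supremum of S exists in E and the two suprema are equal. -/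
open scoped BigOperators

/-- `s` is the supremum of `S` computed in the sublattice `E₀` (with its induced
order): `s ∈ E₀`, `s` is an upper bound of `S`, and `s` is least among the upper
bounds of `S` belonging to `E₀`. -/
def IsLUBIn {E : Type*} [Preorder E] (E₀ : Set E) (S : Set E) (s : E) : Prop :=
  s ∈ E₀ ∧ s ∈ upperBounds S ∧ ∀ b ∈ E₀, b ∈ upperBounds S → s ≤ b

lemma euclid_sum_single {n : ℕ} (x : EuclideanSpace ℝ (Fin n)) :
    ∑ i, x i • EuclideanSpace.single i (1:ℝ)= x := by
  ext j
  rw [show (∑ i, x i • EuclideanSpace.single i (1:ℝ)) j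
      = ∑ i, (x i • EuclideanSpace.single i (1:ℝ)) j from by rw [WithLp.ofLp_sum]; exact Finset.sum_apply j _ _]
  simp [EuclideanSpace.single_apply]

lemma coord_le_dist {n : ℕ} (x y : EuclideanSpace ℝ (Fin n)) (i : Fin n) :
    |x i - y i| ≤ dist x y := by
  rw [EuclideanSpace.dist_eq]
  have h1 : |x i - y i| = Real.sqrt (dist (x i) (y i) ^ 2) := by
    rw [Real.sqrt_sq dist_nonneg, Real.dist_eq]
  rw [h1]
  apply Real.sqrt_le_sqrt
  exact Finset.single_le_sum (f := fun j => dist (x j) (y j) ^ 2)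
    (fun j _ => sq_nonneg _) (Finset.mem_univ i)

lemma subdiff_nonempty {n : ℕ} (φ : EuclideanSpace ℝ (Fin n) → ℝ)
    (hφ : Sublinear φ) : ∃ a, a ∈ subdiff φ := by
  have hφ0 : φ 0 = 0 := by simpa using hφ.2 0 le_rfl 0
  obtain ⟨g, -, hg⟩ := exists_extension_of_le_sublinear
    ⟨⊥, 0⟩ φ (fun c hc x => hφ.2 c hc.le x) hφ.1
    (by rintro ⟨x, hx⟩
        rcases (Submodule.mem_bot ℝ).mp hx with rfl
        simpa using hφ0.ge)
  refine ⟨WithLp.toLp 2 (fun i => g (EuclideanSpace.single i (1:ℝ))), fun x => ?_⟩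
  have hgx : g x = ∑ i, x i * g (EuclideanSpace.single i (1:ℝ)) := by
    conv_lhs => rw [← euclid_sum_single x]
    rw [map_sum]
    simp [smul_eq_mul]
  calc (∑ i, g (EuclideanSpace.single i (1:ℝ)) * x i)
      = g x := by rw [hgx]; exact Finset.sum_congr rfl fun i _ => mul_comm _ _
    _ ≤ φ x := hg x

lemma subdiff_coord_bound {n : ℕ} (φ : EuclideanSpace ℝ (Fin n) → ℝ)
    {a : EuclideanSpace ℝ (Fin n)} (ha : a ∈ subdiff φ) (i : Fin n) :
    |a i| ≤ ∑ j, (|φ (EuclideanSpace.single j (1:ℝ))| + |φ (EuclideanSpace.single j (-1:ℝ))|) := by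
  set C : ℝ := ∑ j, (|φ (EuclideanSpace.single j (1:ℝ))| + |φ (EuclideanSpace.single j (-1:ℝ))|)
    with hC
  have hterm : ∀ j : Fin n,
      (|φ (EuclideanSpace.single j (1:ℝ))| + |φ (EuclideanSpace.single j (-1:ℝ))|) ≤ C :=
    fun j => Finset.single_le_sum
      (f := fun j => (|φ (EuclideanSpace.single j (1:ℝ))| + |φ (EuclideanSpace.single j (-1:ℝ))|))
      (fun k _ => by positivity) (Finset.mem_univ j)
  have h1 : a i ≤ φ (EuclideanSpace.single i (1:ℝ)) := by
    have := ha (EuclideanSpace.single i (1:ℝ))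
    simpa [EuclideanSpace.single_apply] using this
  have h2 : -a i ≤ φ (EuclideanSpace.single i (-1:ℝ)) := by
    have := ha (EuclideanSpace.single i (-1:ℝ))
    simpa [EuclideanSpace.single_apply] using this
  have hnn : (0:ℝ) ≤ |φ (EuclideanSpace.single i (1:ℝ))| + |φ (EuclideanSpace.single i (-1:ℝ))| :=
    by positivity
  rw [abs_le]
  have hA := abs_nonneg (φ (EuclideanSpace.single i (1:ℝ)))
  have hB := abs_nonneg (φ (EuclideanSpace.single i (-1:ℝ)))
  have h1' := h1.trans (le_abs_self _)
  have h2' := h2.trans (le_abs_self _)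
  exact ⟨by linarith [hterm i], by linarith [hterm i]⟩

/-- If `E` is an Archimedean vector lattice, `E₀` a vector
sublattice of `E`, `f₁,…,fₙ ∈ E₀`, `φ : ℝⁿ → ℝ` sublinear, and the supremum of
`S = { Σ aᵢ fᵢ : a ∈ ∂φ(0) }` exists in the ordered set `E₀`, then the supremum
of `S` exists in `E` and the two suprema are equal. -/
theorem stmt7 {n : ℕ} {E : Type*} [Lattice E] [AddCommGroup E] [Module ℝ E]
    [CovariantClass E E (· + ·) (· ≤ ·)] [PosSMulMono ℝ E]
    (hArch : ∀ x y : E, 0 ≤ x → 0 ≤ y → (∀ k : ℕ, k • x ≤ y) → x = 0)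
    (E₀ : Submodule ℝ E)
    (hsup : ∀ x y : E, x ∈ E₀ → y ∈ E₀ → x ⊔ y ∈ E₀)
    (hinf : ∀ x y : E, x ∈ E₀ → y ∈ E₀ → x ⊓ y ∈ E₀)
    (f : Fin n → E) (hf : ∀ i, f i ∈ E₀)
    (φ : EuclideanSpace ℝ (Fin n) → ℝ) (hφ : Sublinear φ)
    (s : E) (hs : IsLUBIn (E₀ : Set E) {x : E | ∃ a ∈ subdiff φ, x = ∑ i, a i • f i} s) :
    IsLUB {x : E | ∃ a ∈ subdiff φ, x = ∑ i, a i • f i} s := by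
  classical
  letI : IsOrderedAddMonoid E :=
    { add_le_add_left := fun a b hab c => add_le_add_left hab c }
  obtain ⟨hsE₀, hub, hleast⟩ := hs
  set S : Set E := {x : E | ∃ a ∈ subdiff φ, x = ∑ i, a i • f i} with hSdef
  refine ⟨hub, fun b hb => ?_⟩
  -- h := ∑ |f i|
  set h : E := ∑ i, |f i| with hhdef
  have hh0 : (0:E) ≤ h := Finset.sum_nonneg fun i _ => abs_nonneg _
  have hhE₀ : h ∈ E₀ := Submodule.sum_mem _ fun i _ => by
    have habs : |f i| = f i ⊔ (-f i) := rfl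
    rw [habs]; exact hsup _ _ (hf i) (E₀.neg_mem (hf i))
  obtain ⟨a₀, ha₀⟩ := subdiff_nonempty φ hφ
  -- smul abs bound
  have hsmul_abs : ∀ (c : ℝ) (v : E), c • v ≤ |c| • |v| := by
    intro c v
    rcases le_total 0 c with hc | hc
    · rw [abs_of_nonneg hc]
      exact smul_le_smul_of_nonneg_left (le_abs_self v) hc
    · rw [abs_of_nonpos hc]
      calc c • v = (-c) • (-v) := by rw [neg_smul, smul_neg, neg_neg]
        _ ≤ (-c) • |v| := smul_le_smul_of_nonneg_left (neg_le_abs v) (by linarith)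
  -- key estimate
  have key : ∀ ε : ℝ, 0 < ε → s ≤ b + ε • h := by
    intro ε hε
    -- total boundedness of subdiff φ
    set C : ℝ := ∑ j, (|φ (EuclideanSpace.single j (1:ℝ))| + |φ (EuclideanSpace.single j (-1:ℝ))|)
      with hCdef
    have hTB : TotallyBounded (subdiff φ) := by
      apply (isCompact_closedBall (0 : EuclideanSpace ℝ (Fin n)) (n * C)).totallyBounded.subset
      intro a ha
      rw [Metric.mem_closedBall, dist_zero_right]
      calc ‖a‖ = ‖∑ i, a i • EuclideanSpace.single i (1:ℝ)‖ := by rw [euclid_sum_single]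
        _ ≤ ∑ i, ‖a i • EuclideanSpace.single i (1:ℝ)‖ := norm_sum_le _ _
        _ = ∑ i, |a i| := by
            simp [norm_smul, EuclideanSpace.norm_single]
        _ ≤ ∑ _i : Fin n, C := Finset.sum_le_sum fun i _ => subdiff_coord_bound φ ha i
        _ = n * C := by simp [mul_comm]
    obtain ⟨t, htA, htfin, hcover⟩ := totallyBounded_iff_subset.mp hTB
      {p | dist p.1 p.2 < ε} (Metric.dist_mem_uniformity hε)
    set T : Finset (EuclideanSpace ℝ (Fin n)) := htfin.toFinset with hTdef
    have hTne : T.Nonempty := by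
      have h0 := hcover ha₀
      rw [Set.mem_iUnion₂] at h0
      obtain ⟨y, hy, -⟩ := h0
      exact ⟨y, htfin.mem_toFinset.mpr hy⟩
    set st : E := T.sup' hTne (fun a => ∑ i, a i • f i) with hstdef
    have hstE₀ : st ∈ E₀ := by
      apply Finset.sup'_induction
      · exact fun x hx y hy => hsup x y hx hy
      · intro y hy
        exact Submodule.sum_mem _ fun i _ => E₀.smul_mem _ (hf i)
    have hstb : st ≤ b :=
      Finset.sup'_le _ _ fun y hy =>
        hb ⟨y, htA (htfin.mem_toFinset.mp hy), rfl⟩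
    have hubS : (st + ε • h) ∈ upperBounds S := by
      rintro x ⟨a, haA, rfl⟩
      have h0 := hcover haA
      rw [Set.mem_iUnion₂] at h0
      obtain ⟨y, hyt, hdist⟩ := h0
      have hdy : dist a y < ε := hdist
      have hterm : ∀ i, a i • f i ≤ y i • f i + ε • |f i| := by
        intro i
        have h1 : (a i - y i) • f i ≤ |a i - y i| • |f i| := hsmul_abs _ _
        have h2 : |a i - y i| • |f i| ≤ ε • |f i| := by
          have hle : |a i - y i| ≤ ε := (coord_le_dist a y i).trans hdy.le
          have : (0:E) ≤ (ε - |a i - y i|) • |f i| :=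
            smul_nonneg (by linarith) (abs_nonneg _)
          rw [sub_smul] at this
          exact sub_nonneg.mp this
        have := h1.trans h2
        calc a i • f i = y i • f i + (a i - y i) • f i := by rw [sub_smul]; abel
          _ ≤ y i • f i + ε • |f i| := add_le_add_right this _
      calc ∑ i, a i • f i ≤ ∑ i, (y i • f i + ε • |f i|) := Finset.sum_le_sum fun i _ => hterm i
        _ = (∑ i, y i • f i) + ε • h := by rw [Finset.sum_add_distrib, Finset.smul_sum]
        _ ≤ st + ε • h := by
            have : (∑ i, y i • f i) ≤ st := Finset.le_sup' (fun a => ∑ i, a i • f i)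
              (htfin.mem_toFinset.mpr hyt)
            exact add_le_add_left this _
    have hsle : s ≤ st + ε • h :=
      hleast _ (E₀.add_mem hstE₀ (E₀.smul_mem ε hhE₀)) hubS
    calc s ≤ st + ε • h := hsle
      _ ≤ b + ε • h := add_le_add_left hstb _
  -- Archimedean argument
  have hu : (s - b) ⊔ 0 = 0 := by
    apply hArch _ h le_sup_right hh0
    intro k
    rcases Nat.eq_zero_or_pos k with rfl | hk
    · simpa using hh0
    · have hkpos : (0:ℝ) < k := by exact_mod_cast hk
      have h1 : s - b ≤ (1/k : ℝ) • h := by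
        have := key (1/k) (by positivity)
        rwa [← sub_le_iff_le_add'] at this
      have h2 : (s - b) ⊔ 0 ≤ (1/k : ℝ) • h :=
        sup_le h1 (smul_nonneg (by positivity) hh0)
      calc k • ((s - b) ⊔ 0) = (k : ℝ) • ((s - b) ⊔ 0) := (Nat.cast_smul_eq_nsmul ℝ k _).symm
        _ ≤ (k : ℝ) • ((1/k : ℝ) • h) := smul_le_smul_of_nonneg_left h2 hkpos.le
        _ = h := by rw [smul_smul, mul_one_div_cancel hkpos.ne', one_smul]
  have : s - b ≤ 0 := le_sup_left.trans hu.le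
  exact sub_nonpos.mp this
end

section
/- Let n ∈ ℕ, let h: ℝ^n → ℝ be a function, let Φ be a nonempty family of sublinear maps ℝ^n → ℝ with h(x) = inf_{φ ∈ Φ} φ(x) for all x ∈ ℝ^n, and let Ψ be a nonempty family of superlinear maps ℝ^n → ℝ with h(x) = sup_{ψ ∈ Ψ} ψ(x) for all x ∈ ℝ^n. If E is a Dedekind complete vector lattice and f_1,…,f_n ∈ E, then inf_{φ ∈ Φ} sup_{a ∈ ∂φ(0)} Σ_{i=1}^n a_i f_i = sup_{ψ ∈ Ψ} inf_{b ∈ ∂ψ(0)} Σ_{i=1}^n b_i f_i (all indicated suprema and infima exist in E). -/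
open scoped BigOperators
open Pointwise

namespace St13

variable {n : ℕ}

local notation "P" => EuclideanSpace ℝ (Fin n)

noncomputable def dotR (a x : EuclideanSpace ℝ (Fin n)) : ℝ := ∑ i, a i * x i

noncomputable def dotL {E : Type*} [AddCommGroup E] [Module ℝ E] (f : Fin n → E) :
    EuclideanSpace ℝ (Fin n) →ₗ[ℝ] E where
  toFun a := ∑ i, a i • f i
  map_add' a b := by
    simp [PiLp.add_apply, add_smul, Finset.sum_add_distrib]
  map_smul' t a := by
    simp [PiLp.smul_apply, mul_smul, Finset.smul_sum]

lemma dotL_apply {E : Type*} [AddCommGroup E] [Module ℝ E] (f : Fin n → E) (a : P) :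
    dotL f a = ∑ i, a i • f i := rfl

lemma decomp (x : P) : ∑ i, x i • EuclideanSpace.single i (1:ℝ) = x := by
  have := (EuclideanSpace.basisFun (Fin n) ℝ).sum_repr x
  simpa [EuclideanSpace.basisFun_apply, EuclideanSpace.basisFun_repr] using this

lemma sublinear_zero {p : P → ℝ} (hp : Sublinear p) : p 0 = 0 := by
  have := hp.2 0 le_rfl 0; simpa using this

lemma sublinear_neg_le {p : P → ℝ} (hp : Sublinear p) (x : P) : -p (-x) ≤ p x := by
  have h := hp.1 x (-x); simp [sublinear_zero hp] at h; linarith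

lemma sublinear_sum_le {p : P → ℝ} (hp : Sublinear p) {ι : Type*} (s : Finset ι)
    (v : ι → P) : p (∑ i ∈ s, v i) ≤ ∑ i ∈ s, p (v i) := by
  classical
  induction s using Finset.cons_induction with
  | empty => simp [sublinear_zero hp]
  | cons a s ha ih =>
      rw [Finset.sum_cons, Finset.sum_cons]
      exact le_trans (hp.1 _ _) (by linarith)

lemma abs_coord_le (x : P) (i : Fin n) : |x i| ≤ ‖x‖ := by
  rw [EuclideanSpace.norm_eq]
  calc |x i| = Real.sqrt (‖x i‖ ^ 2) := by
        rw [Real.sqrt_sq_eq_abs]; simp [Real.norm_eq_abs]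
    _ ≤ _ := by
        apply Real.sqrt_le_sqrt
        exact Finset.single_le_sum (f := fun j => ‖x j‖ ^ 2)
          (fun j _ => sq_nonneg _) (Finset.mem_univ i)

lemma norm_le_sum_abs (x : P) : ‖x‖ ≤ ∑ i, |x i| := by
  rw [EuclideanSpace.norm_eq]
  have hS : ∀ i : Fin n, |x i| ≤ ∑ j, |x j| :=
    fun i => Finset.single_le_sum (f := fun j => |x j|)
      (fun j _ => abs_nonneg _) (Finset.mem_univ i)
  have h : ∑ i, ‖x i‖ ^ 2 ≤ (∑ i, |x i|) ^ 2 := by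
    calc ∑ i, ‖x i‖ ^ 2 = ∑ i, |x i| * |x i| := by
          simp [Real.norm_eq_abs, sq]
      _ ≤ ∑ i, |x i| * (∑ j, |x j|) := by
          apply Finset.sum_le_sum
          exact fun i _ => mul_le_mul_of_nonneg_left (hS i) (abs_nonneg _)
      _ = (∑ i, |x i|) ^ 2 := by rw [← Finset.sum_mul]; ring
  calc Real.sqrt (∑ i, ‖x i‖ ^ 2) ≤ Real.sqrt ((∑ i, |x i|) ^ 2) := Real.sqrt_le_sqrt h
    _ = ∑ i, |x i| := by
        rw [Real.sqrt_sq (Finset.sum_nonneg fun i _ => abs_nonneg _)]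

lemma sublinear_le_norm {p : P → ℝ} (hp : Sublinear p) :
    ∃ C : ℝ, 0 ≤ C ∧ ∀ x, p x ≤ C * ‖x‖ := by
  classical
  set M : Fin n → ℝ := fun i =>
    max (p (EuclideanSpace.single i 1)) (p (-EuclideanSpace.single i 1)) with hM
  have hM0 : ∀ i, 0 ≤ M i := by
    intro i
    by_contra hneg
    push_neg at hneg
    have h1 : p (EuclideanSpace.single i 1) < 0 := lt_of_le_of_lt (le_max_left _ _) hneg
    have h2 : p (-EuclideanSpace.single i 1) < 0 := lt_of_le_of_lt (le_max_right _ _) hneg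
    have := sublinear_neg_le hp (EuclideanSpace.single i 1)
    linarith
  refine ⟨∑ i, M i, Finset.sum_nonneg fun i _ => hM0 i, fun x => ?_⟩
  have hx : p x ≤ ∑ i, p (x i • EuclideanSpace.single i (1:ℝ)) := by
    conv_lhs => rw [← decomp x]
    exact sublinear_sum_le hp _ _
  have hterm : ∀ i, p (x i • EuclideanSpace.single i (1:ℝ)) ≤ M i * ‖x‖ := by
    intro i
    rcases le_or_gt 0 (x i) with hxi | hxi
    · rw [hp.2 _ hxi]
      have : p (EuclideanSpace.single i 1) ≤ M i := le_max_left _ _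
      have habs : x i ≤ ‖x‖ := le_trans (le_abs_self _) (abs_coord_le x i)
      nlinarith [abs_coord_le x i, abs_nonneg (x i), norm_nonneg x, hM0 i,
        le_abs_self (p (EuclideanSpace.single i (1:ℝ)))]
    · have : x i • EuclideanSpace.single i (1:ℝ) =
          (-(x i)) • (-EuclideanSpace.single i 1) := by
        rw [smul_neg, neg_smul, neg_neg]
      rw [this, hp.2 _ (by linarith)]
      have h1 : p (-EuclideanSpace.single i 1) ≤ M i := le_max_right _ _
      have habs : -(x i) ≤ ‖x‖ := le_trans (neg_le_abs _) (abs_coord_le x i)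
      nlinarith [hM0 i, norm_nonneg x]
  calc p x ≤ ∑ i, p (x i • EuclideanSpace.single i (1:ℝ)) := hx
    _ ≤ ∑ i, M i * ‖x‖ := Finset.sum_le_sum fun i _ => hterm i
    _ = (∑ i, M i) * ‖x‖ := by rw [Finset.sum_mul]

lemma sublinear_continuous {p : P → ℝ} (hp : Sublinear p) : Continuous p := by
  obtain ⟨C, hC0, hC⟩ := sublinear_le_norm hp
  have key : ∀ x y : P, p x - p y ≤ C * ‖x - y‖ := by
    intro x y
    have h1 : p x ≤ p (x - y) + p y := by
      have := hp.1 (x - y) y; simpa using this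
    have := hC (x - y)
    linarith
  have : LipschitzWith (Real.toNNReal C) p := by
    apply LipschitzWith.of_dist_le_mul
    intro x y
    rw [Real.dist_eq, Real.coe_toNNReal C hC0, dist_eq_norm, abs_le]
    constructor
    · have := key y x
      have h2 : ‖y - x‖ = ‖x - y‖ := norm_sub_rev y x
      rw [h2] at this
      linarith [this]
    · exact key x y
  exact this.continuous

lemma linear_eq_dotR (g : EuclideanSpace ℝ (Fin n) →ₗ[ℝ] ℝ) (x : P) :
    g x = dotR (WithLp.toLp 2 (fun i => g (EuclideanSpace.single i 1))) x := by
  conv_lhs => rw [← decomp x]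
  rw [map_sum]
  simp [dotR, smul_eq_mul, mul_comm]

lemma dotR_zero_right (a : P) : dotR a (0 : P) = 0 := by simp [dotR]

lemma dotR_single (a : P) (i : Fin n) : dotR a (EuclideanSpace.single i (1:ℝ)) = a i := by
  simp [dotR, EuclideanSpace.single_apply]

lemma dotR_add_left (a b x : P) : dotR (a + b) x = dotR a x + dotR b x := by
  simp [dotR, PiLp.add_apply, add_mul, Finset.sum_add_distrib]

lemma dotR_smul_left (t : ℝ) (a x : P) : dotR (t • a) x = t * dotR a x := by
  simp [dotR, PiLp.smul_apply, Finset.mul_sum, mul_assoc]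

lemma dotR_neg_left (a x : P) : dotR (-a) x = -dotR a x := by
  simp [dotR, PiLp.neg_apply]

lemma dotR_sub_left (a b x : P) : dotR (a - b) x = dotR a x - dotR b x := by
  simp [dotR, PiLp.sub_apply, sub_mul, Finset.sum_sub_distrib]

lemma dotR_add_right (a x y : P) : dotR a (x + y) = dotR a x + dotR a y := by
  simp [dotR, PiLp.add_apply, mul_add, Finset.sum_add_distrib]

lemma dotR_smul_right (t : ℝ) (a x : P) : dotR a (t • x) = t * dotR a x := by
  simp [dotR, PiLp.smul_apply, Finset.mul_sum, mul_left_comm]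

lemma dotR_neg_right (a x : P) : dotR a (-x) = -dotR a x := by
  simp [dotR, PiLp.neg_apply]

lemma mem_subdiff {p : P → ℝ} {a : P} (ha : a ∈ subdiff p) (x : P) : dotR a x ≤ p x := ha x

lemma dotR_continuous (a : P) : Continuous fun y : EuclideanSpace ℝ (Fin n) => dotR a y := by
  have : (fun y : EuclideanSpace ℝ (Fin n) => dotR a y) = fun y => ∑ i, a i * y i := rfl
  rw [this]
  exact continuous_finset_sum _ fun i _ => continuous_const.mul
    ((EuclideanSpace.proj (𝕜 := ℝ) i).continuous)

/-- Hahn–Banach attainment for a nonzero point. -/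
lemma exists_subdiff_attain' {p : P → ℝ} (hp : Sublinear p) (x : P) (hx : x ≠ 0) :
    ∃ a ∈ subdiff p, dotR a x = p x := by
  classical
  have H : ∀ c : ℝ, c • x = 0 → c • (p x) = 0 := by
    intro c hc
    rcases smul_eq_zero.mp hc with h | h
    · simp [h]
    · exact absurd h hx
  set fpm := LinearPMap.mkSpanSingleton' (σ := RingHom.id ℝ) x (p x) H with hfpm
  have hdom : fpm.domain = (ℝ ∙ x) := LinearPMap.domain_mkSpanSingleton (σ := RingHom.id ℝ) x (p x) H
  have hf : ∀ z : fpm.domain, fpm z ≤ p z := by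
    rintro ⟨z, hz⟩
    have hz' : z ∈ (ℝ ∙ x) := by rw [← hdom]; exact hz
    obtain ⟨t, ht⟩ := Submodule.mem_span_singleton.mp hz'
    have hmem : t • x ∈ fpm.domain := by rw [ht]; exact hz
    have happ : fpm ⟨z, hz⟩ = t * p x := by
      have : fpm ⟨t • x, hmem⟩ = t • p x :=
        LinearPMap.mkSpanSingleton'_apply (σ := RingHom.id ℝ) x (p x) H t hmem
      have hzz : (⟨z, hz⟩ : fpm.domain) = ⟨t • x, hmem⟩ := Subtype.ext ht.symm
      rw [hzz, this, smul_eq_mul]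
    rw [happ]
    show t * p x ≤ p z
    rw [← ht]
    rcases le_or_gt 0 t with h | h
    · rw [hp.2 t h]
    · have h1 : t • x = (-t) • (-x) := by rw [smul_neg, neg_smul, neg_neg]
      rw [h1, hp.2 (-t) (by linarith)]
      have h2 := sublinear_neg_le hp x
      nlinarith
  obtain ⟨g, hg1, hg2⟩ := exists_extension_of_le_sublinear fpm p
    (fun c hc y => hp.2 c hc.le y) hp.1 hf
  refine ⟨WithLp.toLp 2 (fun i => g (EuclideanSpace.single i 1)), ?_, ?_⟩
  · intro y
    have : dotR (WithLp.toLp 2 (fun i => g (EuclideanSpace.single i 1))) y ≤ p y := by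
      rw [← linear_eq_dotR]; exact hg2 y
    exact this
  · have hxmem : x ∈ fpm.domain := by
      rw [hdom]; exact Submodule.mem_span_singleton_self x
    have h1 : g x = fpm ⟨x, hxmem⟩ := hg1 ⟨x, hxmem⟩
    have h2 : fpm ⟨x, hxmem⟩ = p x :=
      LinearPMap.mkSpanSingleton'_apply_self (σ := RingHom.id ℝ) x (p x) H hxmem
    rw [← linear_eq_dotR, h1, h2]

lemma subdiff_nonempty {p : P → ℝ} (hp : Sublinear p) : ∃ a, a ∈ subdiff p := by
  by_cases hex : ∃ y : P, y ≠ 0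
  · obtain ⟨y, hy⟩ := hex
    obtain ⟨a, ha, _⟩ := exists_subdiff_attain' hp y hy
    exact ⟨a, ha⟩
  · push_neg at hex
    refine ⟨0, fun y => ?_⟩
    rw [hex y]
    have h0 : ∑ i, (0 : P) i * (0 : P) i ≤ p 0 := by
      simp [sublinear_zero hp]
    exact h0

lemma exists_subdiff_attain {p : P → ℝ} (hp : Sublinear p) (x : P) :
    ∃ a ∈ subdiff p, dotR a x = p x := by
  by_cases hx : x = 0
  · obtain ⟨a, ha⟩ := subdiff_nonempty hp
    exact ⟨a, ha, by rw [hx, dotR_zero_right, sublinear_zero hp]⟩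
  · exact exists_subdiff_attain' hp x hx

lemma superlinear_zero {q : P → ℝ} (hq : Superlinear q) : q 0 = 0 := by
  have := sublinear_zero hq; simpa using this

lemma superlinear_add {q : P → ℝ} (hq : Superlinear q) (x y : P) :
    q x + q y ≤ q (x + y) := by
  have := hq.1 x y; simp at this; linarith

lemma superlinear_smul {q : P → ℝ} (hq : Superlinear q) {c : ℝ} (hc : 0 ≤ c) (x : P) :
    q (c • x) = c * q x := by
  have := hq.2 c hc x; simp at this; linarith

/-- The sandwich (Mazur–Orlicz/Hahn–Banach) theorem in ℝⁿ. -/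
lemma exists_sandwich {p q : P → ℝ} (hp : Sublinear p) (hq : Superlinear q)
    (hle : ∀ x, q x ≤ p x) :
    ∃ a ∈ subdiff p, ∀ x, q x ≤ dotR a x := by
  classical
  by_cases hex : ∃ x₀ : P, x₀ ≠ 0
  swap
  · push_neg at hex
    refine ⟨0, fun y => ?_, fun y => ?_⟩
    · have : dotR (0:P) y ≤ p y := by
        rw [hex y, dotR_zero_right, sublinear_zero hp]
      exact this
    · rw [hex y, dotR_zero_right, superlinear_zero hq]
  obtain ⟨x₀, hx₀⟩ := hex
  set F : P → P → ℝ := fun z y => p (z + y) - q y with hF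
  have Nne : ∀ z, (Set.range (F z)).Nonempty := fun z => ⟨F z 0, ⟨0, rfl⟩⟩
  have Nbdd : ∀ z, BddBelow (Set.range (F z)) := by
    intro z
    refine ⟨-p (-z), ?_⟩
    rintro w ⟨y, rfl⟩
    have h1 : q y ≤ p y := hle y
    have h2 : p y ≤ p (z + y) + p (-z) := by
      have := hp.1 (z + y) (-z); simpa [add_comm, add_assoc] using this
    simp only [hF]
    linarith
  set N : P → ℝ := fun z => sInf (Set.range (F z)) with hN
  have Nmem_le : ∀ z y, N z ≤ p (z + y) - q y := fun z y => csInf_le (Nbdd z) ⟨y, rfl⟩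
  have NleP : ∀ z, N z ≤ p z := by
    intro z
    have := Nmem_le z 0
    simpa [superlinear_zero hq] using this
  have Nzero : N 0 = 0 := by
    apply le_antisymm
    · simpa [sublinear_zero hp] using NleP 0
    · apply le_csInf (Nne 0)
      rintro w ⟨y, rfl⟩
      simp only [hF, zero_add]
      linarith [hle y]
  have Nadd : ∀ z₁ z₂, N (z₁ + z₂) ≤ N z₁ + N z₂ := by
    intro z₁ z₂
    have inner : ∀ y₁, N (z₁ + z₂) - (p (z₁ + y₁) - q y₁) ≤ N z₂ := by
      intro y₁
      apply le_csInf (Nne z₂)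
      rintro w ⟨y₂, rfl⟩
      have k := Nmem_le (z₁ + z₂) (y₁ + y₂)
      have hq2 := superlinear_add hq y₁ y₂
      have hp2 : p (z₁ + z₂ + (y₁ + y₂)) ≤ p (z₁ + y₁) + p (z₂ + y₂) := by
        have := hp.1 (z₁ + y₁) (z₂ + y₂)
        have harg : z₁ + z₂ + (y₁ + y₂) = z₁ + y₁ + (z₂ + y₂) := by abel
        rw [harg]; exact this
      simp only [hF] at k ⊢
      linarith
    have : N (z₁ + z₂) - N z₂ ≤ N z₁ := by
      apply le_csInf (Nne z₁)
      rintro w ⟨y₁, rfl⟩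
      have := inner y₁
      simp only [hF] at this ⊢
      linarith
    linarith
  have Nhom : ∀ c : ℝ, 0 < c → ∀ z, N (c • z) = c * N z := by
    intro c hc z
    have hrange : Set.range (F (c • z)) = (fun w => c * w) '' Set.range (F z) := by
      ext w
      constructor
      · rintro ⟨y, rfl⟩
        refine ⟨F z (c⁻¹ • y), ⟨c⁻¹ • y, rfl⟩, ?_⟩
        simp only [hF]
        have h1 : c • z + y = c • (z + c⁻¹ • y) := by
          rw [smul_add, smul_inv_smul₀ hc.ne']
        have hqy : q y = c * q (c⁻¹ • y) := by
          conv_lhs => rw [← smul_inv_smul₀ hc.ne' y]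
          rw [superlinear_smul hq hc.le]
        rw [h1, hp.2 c hc.le, hqy]
        ring
      · rintro ⟨w', ⟨y, rfl⟩, rfl⟩
        refine ⟨c • y, ?_⟩
        simp only [hF]
        have h1 : c • z + c • y = c • (z + y) := by rw [smul_add]
        rw [h1, hp.2 c hc.le, superlinear_smul hq hc.le]
        ring
    have himg : (fun w => c * w) '' Set.range (F z) = c • Set.range (F z) := by
      ext w; simp [Set.mem_smul_set, smul_eq_mul, eq_comm]
    rw [hN]
    simp only
    rw [hrange, himg, Real.sInf_smul_of_nonneg hc.le]
    rfl
  have H : ∀ t : ℝ, t • x₀ = 0 → t • (N x₀) = 0 := by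
    intro t ht
    rcases smul_eq_zero.mp ht with h | h
    · simp [h]
    · exact absurd h hx₀
  set fpm := LinearPMap.mkSpanSingleton' (σ := RingHom.id ℝ) x₀ (N x₀) H with hfpm
  have hdom : fpm.domain = (ℝ ∙ x₀) := LinearPMap.domain_mkSpanSingleton (σ := RingHom.id ℝ) x₀ (N x₀) H
  have hf : ∀ z : fpm.domain, fpm z ≤ N z := by
    rintro ⟨z, hz⟩
    have hz' : z ∈ (ℝ ∙ x₀) := by rw [← hdom]; exact hz
    obtain ⟨t, ht⟩ := Submodule.mem_span_singleton.mp hz'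
    have hmem : t • x₀ ∈ fpm.domain := by rw [ht]; exact hz
    have happ : fpm ⟨z, hz⟩ = t * N x₀ := by
      have h2 : fpm ⟨t • x₀, hmem⟩ = t • N x₀ :=
        LinearPMap.mkSpanSingleton'_apply (σ := RingHom.id ℝ) x₀ (N x₀) H t hmem
      have hzz : (⟨z, hz⟩ : fpm.domain) = ⟨t • x₀, hmem⟩ := Subtype.ext ht.symm
      rw [hzz, h2, smul_eq_mul]
    rw [happ]
    show t * N x₀ ≤ N z
    rw [← ht]
    rcases lt_trichotomy t 0 with h | h | h
    · have h1 : N (t • x₀) + N ((-t) • x₀) ≥ N 0 := by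
        have := Nadd (t • x₀) ((-t) • x₀)
        have harg : t • x₀ + (-t) • x₀ = 0 := by
          rw [neg_smul, add_neg_cancel]
        rw [harg] at this; linarith
      rw [Nzero] at h1
      have h2 : N ((-t) • x₀) = (-t) * N x₀ := Nhom (-t) (by linarith) x₀
      nlinarith
    · subst h; simp [Nzero]
    · rw [Nhom t h]
  obtain ⟨g, hg1, hg2⟩ := exists_extension_of_le_sublinear fpm N Nhom Nadd hf
  refine ⟨WithLp.toLp 2 (fun i => g (EuclideanSpace.single i 1)), fun y => ?_, fun y => ?_⟩
  · have : dotR (WithLp.toLp 2 (fun i => g (EuclideanSpace.single i 1))) y ≤ p y := by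
      rw [← linear_eq_dotR]
      exact le_trans (hg2 y) (NleP y)
    exact this
  · have h1 : g (-y) ≤ N (-y) := hg2 (-y)
    have h2 : N (-y) ≤ p (-y + y) - q y := Nmem_le (-y) y
    have h3 : p (-y + y) = 0 := by
      rw [neg_add_cancel, sublinear_zero hp]
    have h4 : g (-y) = -g y := by rw [map_neg]
    rw [← linear_eq_dotR]
    linarith

/-- Separation: a linear functional dominated by the max over a finite set lies
in the convex hull of that set. -/
lemma mem_convexHull_of_dotR_le (B : Finset (EuclideanSpace ℝ (Fin n))) (hB : B.Nonempty)
    (c : EuclideanSpace ℝ (Fin n))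
    (hc : ∀ x, dotR c x ≤ B.sup' hB fun b => dotR b x) :
    c ∈ convexHull ℝ (B : Set (EuclideanSpace ℝ (Fin n))) := by
  by_contra hout
  obtain ⟨l, u, hlt, hgt⟩ := geometric_hahn_banach_closed_point
    (convex_convexHull ℝ _) ((B.finite_toSet.isCompact_convexHull (𝕜 := ℝ)).isClosed) hout
  set xl : P := WithLp.toLp 2 (fun i => l (EuclideanSpace.single i 1) : Fin n → ℝ) with hxl
  have hdot : ∀ b : P, dotR b xl = l b := by
    intro b
    conv_rhs => rw [← decomp b]
    rw [map_sum]
    simp [dotR, hxl, smul_eq_mul, mul_comm]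
  obtain ⟨b₀, hb₀, hb₀eq⟩ := Finset.exists_mem_eq_sup' hB fun b => dotR b xl
  have h1 : dotR c xl ≤ dotR b₀ xl := by rw [← hb₀eq]; exact hc xl
  have h2 : l b₀ < u := hlt b₀ (subset_convexHull ℝ _ hb₀)
  rw [hdot, hdot] at h1
  linarith

lemma rep_of_mem_convexHull {B : Finset (EuclideanSpace ℝ (Fin n))}
    {c : EuclideanSpace ℝ (Fin n)} (hc : c ∈ convexHull ℝ (B : Set (EuclideanSpace ℝ (Fin n)))) :
    ∃ w : EuclideanSpace ℝ (Fin n) → ℝ, (∀ b ∈ B, 0 ≤ w b) ∧ ∑ b ∈ B, w b = 1 ∧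
      ∑ b ∈ B, w b • b = c := by
  rw [Finset.convexHull_eq] at hc
  obtain ⟨w, hw0, hw1, hwc⟩ := hc
  refine ⟨w, hw0, hw1, ?_⟩
  rw [← hwc, Finset.centerMass_eq_of_sum_1 _ _ hw1]
  rfl

noncomputable def signs (n : ℕ) : Finset (EuclideanSpace ℝ (Fin n)) :=
  (Fintype.piFinset fun _ : Fin n => ({-1, 1} : Finset ℝ)).map
    ⟨WithLp.toLp 2, WithLp.toLp_injective 2⟩

lemma signs_nonempty : (signs n).Nonempty := by
  refine ⟨WithLp.toLp 2 (fun _ => 1 : Fin n → ℝ), ?_⟩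
  rw [signs, Finset.mem_map]
  exact ⟨_, by rw [Fintype.mem_piFinset]; intro i; simp, rfl⟩

lemma mem_signs_iff {s : P} : s ∈ signs n ↔ ∀ i, s i = -1 ∨ s i = 1 := by
  rw [signs, Finset.mem_map]
  constructor
  · rintro ⟨t, ht, rfl⟩ i
    rw [Fintype.mem_piFinset] at ht
    simpa using ht i
  · intro hs
    refine ⟨WithLp.ofLp s, ?_, rfl⟩
    rw [Fintype.mem_piFinset]
    intro i
    simpa using hs i

lemma dotR_sign_le (s : P) (hs : s ∈ signs n) (z : P) : dotR s z ≤ ∑ i, |z i| := by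
  rw [dotR]
  apply Finset.sum_le_sum
  intro i _
  rcases (mem_signs_iff.mp hs) i with h | h <;> rw [h]
  · rw [neg_one_mul]; exact le_trans (neg_le_abs _) le_rfl
  · rw [one_mul]; exact le_abs_self _

lemma exists_sign_dotR (z : P) : ∃ s ∈ signs n, dotR s z = ∑ i, |z i| := by
  refine ⟨WithLp.toLp 2 (fun i => if 0 ≤ z i then 1 else -1 : Fin n → ℝ), ?_, ?_⟩
  · rw [mem_signs_iff]
    intro i
    by_cases h : 0 ≤ z i <;> simp [h]
  · rw [dotR]
    apply Finset.sum_congr rfl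
    intro i _
    by_cases h : 0 ≤ z i
    · simp [h, abs_of_nonneg h]
    · push_neg at h
      simp [not_le.mpr h, abs_of_neg h]

lemma sublinear_absSum (C : ℝ) (hC : 0 ≤ C) :
    Sublinear (fun x : EuclideanSpace ℝ (Fin n) => C * ∑ i, |x i|) := by
  constructor
  · intro x y
    rw [← mul_add]
    apply mul_le_mul_of_nonneg_left _ hC
    rw [← Finset.sum_add_distrib]
    apply Finset.sum_le_sum
    intro i _
    exact abs_add_le _ _
  · intro c hc x
    have : ∀ i, |(c • x) i| = c * |x i| := by
      intro i
      rw [PiLp.smul_apply, smul_eq_mul, abs_mul, abs_of_nonneg hc]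
    simp only [this]
    rw [← Finset.mul_sum]
    ring

/-- finite sup of linear functionals is sublinear. -/
lemma sublinear_sup'_dotR {ι : Type*} (J : Finset ι) (hJ : J.Nonempty) (c : ι → P) :
    Sublinear (fun x : EuclideanSpace ℝ (Fin n) => J.sup' hJ fun j => dotR (c j) x) := by
  constructor
  · intro x y
    apply Finset.sup'_le
    intro j hj
    rw [dotR_add_right]
    exact add_le_add (Finset.le_sup' (fun j => dotR (c j) x) hj)
      (Finset.le_sup' (fun j => dotR (c j) y) hj)
  · intro t ht x
    simp only [dotR_smul_right]
    rcases eq_or_lt_of_le ht with rfl | h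
    · simp only [zero_mul]
      rw [Finset.sup'_const]
    · have key : ∀ a b : ℝ, t * (a ⊔ b) = (t * a) ⊔ (t * b) := fun a b =>
        mul_max_of_nonneg a b h.le
      rw [Finset.comp_sup'_eq_sup'_comp (α := ℝ) (γ := ℝ)
        (f := fun j => dotR (c j) x) hJ (fun w => t * w) key]
      rfl

lemma neg_inf'_eq {ι : Type*} (J : Finset ι) (hJ : J.Nonempty) (v : ι → ℝ) :
    -(J.inf' hJ v) = J.sup' hJ fun j => -(v j) := by
  apply le_antisymm
  · obtain ⟨j, hj, hje⟩ := Finset.exists_mem_eq_inf' hJ v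
    rw [hje]
    exact Finset.le_sup' (fun j => -(v j)) hj
  · apply Finset.sup'_le
    intro j hj
    exact neg_le_neg (Finset.inf'_le _ hj)

section Elattice

variable {E : Type*} [Lattice E] [AddCommGroup E] [Module ℝ E]
    [CovariantClass E E (· + ·) (· ≤ ·)] [PosSMulMono ℝ E]

lemma my_sum_le_sum {ι : Type*} (s : Finset ι) (f g : ι → E) (h : ∀ i ∈ s, f i ≤ g i) :
    ∑ i ∈ s, f i ≤ ∑ i ∈ s, g i := by
  classical
  induction s using Finset.cons_induction with
  | empty => simp
  | cons a s ha ih =>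
      rw [Finset.sum_cons, Finset.sum_cons]
      exact add_le_add (h a (Finset.mem_cons_self a s))
        (ih fun i hi => h i (Finset.mem_cons_of_mem hi))

lemma smul_le_abs_smul_abs (c : ℝ) (x : E) : c • x ≤ |c| • |x| := by
  rcases le_or_gt 0 c with h | h
  · calc c • x ≤ c • |x| := smul_le_smul_of_nonneg_left (le_abs_self x) h
      _ = |c| • |x| := by rw [abs_of_nonneg h]
  · calc c • x = (-c) • (-x) := by rw [neg_smul, smul_neg, neg_neg]
    _ ≤ (-c) • |x| := smul_le_smul_of_nonneg_left (neg_le_abs x) (by linarith)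
    _ = |c| • |x| := by rw [abs_of_neg h]

lemma smul_le_smul_scalar {c d : ℝ} (h : c ≤ d) {x : E} (hx : 0 ≤ x) : c • x ≤ d • x := by
  have h1 : 0 ≤ (d - c) • x := by
    have := smul_le_smul_of_nonneg_left hx (sub_nonneg.mpr h)
    simpa using this
  have h2 : d • x = c • x + (d - c) • x := by
    rw [← add_smul]; ring_nf
  rw [h2]
  simpa using add_le_add_left h1 (c • x)

lemma neg_antitone {a b : E} (h : a ≤ b) : -b ≤ -a := by
  have h2 := add_le_add_right h (-a + -b)
  calc -b = -a + -b + a := by abel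
    _ ≤ -a + -b + b := h2
    _ = -a := by abel

lemma combo_le {ι : Type*} (B : Finset ι) (w : ι → ℝ) (hw0 : ∀ b ∈ B, 0 ≤ w b)
    (hw1 : ∑ b ∈ B, w b = 1) (g : ι → E) (M : E) (hM : ∀ b ∈ B, g b ≤ M) :
    ∑ b ∈ B, w b • g b ≤ M := by
  calc ∑ b ∈ B, w b • g b ≤ ∑ b ∈ B, w b • M := by
        apply my_sum_le_sum
        intro b hb
        exact smul_le_smul_of_nonneg_left (hM b hb) (hw0 b hb)
    _ = (∑ b ∈ B, w b) • M := by rw [Finset.sum_smul]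
    _ = M := by rw [hw1, one_smul]

lemma le_zero_of_forall_smul (hDCsup : ∀ S : Set E, S.Nonempty → BddAbove S → ∃ s, IsLUB S s)
    (e : E) (he : 0 ≤ e) (w : E) (hw : ∀ ε : ℝ, 0 < ε → w ≤ ε • e) : w ≤ 0 := by
  set S : Set E := Set.range fun k : ℕ => (k : ℝ) • w with hS
  have hne : S.Nonempty := ⟨_, ⟨0, rfl⟩⟩
  have hbdd : BddAbove S := by
    refine ⟨e, ?_⟩
    rintro x ⟨k, rfl⟩
    rcases Nat.eq_zero_or_pos k with hk | hk
    · subst hk; simp [he]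
    · have hkpos : (0:ℝ) < k := by exact_mod_cast hk
      have := hw ((k:ℝ)⁻¹) (by positivity)
      calc (k:ℝ) • w ≤ (k:ℝ) • ((k:ℝ)⁻¹ • e) :=
            smul_le_smul_of_nonneg_left this (by positivity)
        _ = e := by rw [smul_smul, mul_inv_cancel₀ hkpos.ne', one_smul]
  obtain ⟨s, hs⟩ := hDCsup S hne hbdd
  have key : ∀ k : ℕ, (k:ℝ) • w ≤ s - w := by
    intro k
    have h1 : ((k+1 : ℕ):ℝ) • w ≤ s := hs.1 ⟨k+1, rfl⟩
    have h2 : ((k+1 : ℕ):ℝ) • w = (k:ℝ) • w + w := by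
      push_cast
      rw [add_smul, one_smul]
    rw [h2] at h1
    exact le_sub_iff_add_le.mpr h1
  have hub : s ≤ s - w := hs.2 (by rintro x ⟨k, rfl⟩; exact key k)
  rw [le_sub_iff_add_le] at hub
  simpa using hub

lemma inf'_sup'_le_of_selections {ι β : Type*} [DecidableEq ι]
    (J : Finset ι) (hJ : J.Nonempty) (A : ι → Finset β) (hA : ∀ j, (A j).Nonempty)
    (V : β → E) (M : E)
    (hsel : ∀ g : ι → β, (∀ j ∈ J, g j ∈ A j) → (J.inf' hJ fun j => V (g j)) ≤ M) :
    (J.inf' hJ fun j => (A j).sup' (hA j) V) ≤ M := by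
  letI : DistribLattice E := AddCommGroup.toDistribLattice E
  suffices H : ∀ (J : Finset ι) (hJ : J.Nonempty) (z : E),
      (∀ g : ι → β, (∀ j ∈ J, g j ∈ A j) → z ⊓ (J.inf' hJ fun j => V (g j)) ≤ M) →
      z ⊓ (J.inf' hJ fun j => (A j).sup' (hA j) V) ≤ M by
    have h2 := H J hJ (J.inf' hJ fun j => (A j).sup' (hA j) V) ?_
    · simpa using h2
    · intro g hg
      exact le_trans inf_le_right (hsel g hg)
  intro J hJ
  induction hJ using Finset.Nonempty.cons_induction with
  | singleton a =>
      intro z hz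
      rw [Finset.inf'_singleton, Finset.sup'_inf_distrib_left]
      apply Finset.sup'_le
      intro b hb
      have h1 := hz (fun _ => b) (by
        intro j hj
        rw [Finset.mem_singleton] at hj
        subst hj
        exact hb)
      simpa using h1
  | cons a s ha hs ih =>
      intro z hz
      rw [Finset.inf'_cons hs, ← inf_assoc, Finset.sup'_inf_distrib_left,
        Finset.sup'_inf_distrib_right]
      apply Finset.sup'_le
      intro b hb
      apply ih
      intro g hg
      set g' : ι → β := fun j => if j = a then b else g j with hg'def
      have hg' : ∀ j ∈ Finset.cons a s ha, g' j ∈ A j := by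
        intro j hj
        rcases Finset.mem_cons.mp hj with rfl | hj'
        · simp only [hg'def, if_pos rfl]; exact hb
        · have hne : j ≠ a := by
            rintro rfl; exact ha hj'
          simp only [hg'def, if_neg hne]; exact hg j hj'
      have h2 := hz g' hg'
      rw [Finset.inf'_cons hs] at h2
      have hga : g' a = b := if_pos rfl
      have hcong : (s.inf' hs fun j => V (g' j)) = s.inf' hs fun j => V (g j) := by
        apply Finset.inf'_congr
        · rfl
        · intro j hj
          have hne : j ≠ a := by rintro rfl; exact ha hj
          simp [hg'def, if_neg hne]
      rw [hga, hcong, ← inf_assoc] at h2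
      exact h2

end Elattice

end St13

set_option maxHeartbeats 3000000 in
theorem stmt13 {n : ℕ} {E : Type*} [Lattice E] [AddCommGroup E] [Module ℝ E]
    [CovariantClass E E (· + ·) (· ≤ ·)] [PosSMulMono ℝ E]
    (hDCsup : ∀ S : Set E, S.Nonempty → BddAbove S → ∃ s, IsLUB S s)
    (hDCinf : ∀ S : Set E, S.Nonempty → BddBelow S → ∃ s, IsGLB S s)
    (h : EuclideanSpace ℝ (Fin n) → ℝ)
    (Φ Ψ : Set (EuclideanSpace ℝ (Fin n) → ℝ)) (hΦne : Φ.Nonempty) (hΨne : Ψ.Nonempty)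
    (hΦ : ∀ φ ∈ Φ, Sublinear φ) (hΨ : ∀ ψ ∈ Ψ, Superlinear ψ)
    (hrepΦ : ∀ x, IsGLB {y : ℝ | ∃ φ ∈ Φ, y = φ x} (h x))
    (hrepΨ : ∀ x, IsLUB {y : ℝ | ∃ ψ ∈ Ψ, y = ψ x} (h x))
    (f : Fin n → E) :
    ∃ u v, IsGLB {s : E | ∃ φ ∈ Φ,
        IsLUB {x : E | ∃ a ∈ subdiff φ, x = ∑ i, a i • f i} s} u ∧
      IsLUB {t : E | ∃ ψ ∈ Ψ,
        IsGLB {x : E | ∃ b ∈ superdiff ψ, x = ∑ i, b i • f i} t} v ∧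
      u = v := by
  classical
  -- abbreviations
  set D : EuclideanSpace ℝ (Fin n) →ₗ[ℝ] E := St13.dotL f with hDdef
  have hDA : ∀ a : EuclideanSpace ℝ (Fin n), D a = ∑ i, a i • f i := fun a => rfl
  set SS : (EuclideanSpace ℝ (Fin n) → ℝ) → Set E :=
    fun φ => {x : E | ∃ a ∈ subdiff φ, x = ∑ i, a i • f i} with hSSdef
  set TT : (EuclideanSpace ℝ (Fin n) → ℝ) → Set E :=
    fun ψ => {x : E | ∃ b ∈ superdiff ψ, x = ∑ i, b i • f i} with hTTdef
  set e : E := ∑ i, |f i| with hedef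
  have he0 : (0:E) ≤ e := by
    rw [hedef]
    have := St13.my_sum_le_sum (E := E) Finset.univ (fun _ => 0) (fun i => |f i|)
      (fun i _ => abs_nonneg (f i))
    simpa using this
  -- membership in superdiff via negation
  have hsupneg : ∀ ψ : EuclideanSpace ℝ (Fin n) → ℝ, ∀ b,
      b ∈ superdiff ψ ↔ (-b) ∈ subdiff (fun x => -ψ x) := by
    intro ψ b
    have hnb : ∀ x : EuclideanSpace ℝ (Fin n), ∑ i, (-b) i * x i = -(∑ i, b i * x i) := by
      intro x; simp [PiLp.neg_apply]
    constructor
    · intro hb x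
      show ∑ i, (-b) i * x i ≤ -ψ x
      rw [hnb x]
      linarith [hb x]
    · intro hb x
      have h3 : ∑ i, (-b) i * x i ≤ -ψ x := hb x
      rw [hnb x] at h3
      linarith
  -- uniform bound on subdifferential images
  have hbnd : ∀ p : EuclideanSpace ℝ (Fin n) → ℝ, ∀ a ∈ subdiff p,
      D a ≤ ∑ i, (max (p (EuclideanSpace.single i 1)) (p (-EuclideanSpace.single i 1))) • |f i| := by
    intro p a ha
    rw [hDA]
    apply St13.my_sum_le_sum
    intro i _
    have hai : |a i| ≤ max (p (EuclideanSpace.single i 1)) (p (-EuclideanSpace.single i 1)) := by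
      rw [abs_le]
      constructor
      · have h1 := ha (-EuclideanSpace.single i 1)
        have h2 : ∑ j, a j * (-EuclideanSpace.single i 1 : EuclideanSpace ℝ (Fin n)) j
            = -(a i) := by
          have := St13.dotR_neg_right a (EuclideanSpace.single i (1:ℝ))
          rw [St13.dotR_single] at this
          exact this
        rw [h2] at h1
        have : -(a i) ≤ max (p (EuclideanSpace.single i 1)) (p (-EuclideanSpace.single i 1)) :=
          le_trans h1 (le_max_right _ _)
        linarith
      · have h1 := ha (EuclideanSpace.single i 1)
        have h2 : ∑ j, a j * (EuclideanSpace.single i 1 : EuclideanSpace ℝ (Fin n)) j = a i :=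
          St13.dotR_single a i
        rw [h2] at h1
        exact le_trans h1 (le_max_left _ _)
    calc a i • f i ≤ |a i| • |f i| := St13.smul_le_abs_smul_abs _ _
      _ ≤ _ := St13.smul_le_smul_scalar hai (abs_nonneg (f i))
  -- existence of suprema S φ
  have hSex : ∀ φ ∈ Φ, ∃ s, IsLUB (SS φ) s := by
    intro φ hφ'
    apply hDCsup
    · obtain ⟨a, ha⟩ := St13.subdiff_nonempty (hΦ φ hφ')
      exact ⟨D a, a, ha, rfl⟩
    · exact ⟨_, by rintro x ⟨a, ha, rfl⟩; exact hbnd φ a ha⟩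
  choose! S hS using hSex
  -- existence of infima T ψ
  have hTex : ∀ ψ ∈ Ψ, ∃ t, IsGLB (TT ψ) t := by
    intro ψ hψ'
    apply hDCinf
    · obtain ⟨a, ha⟩ := St13.subdiff_nonempty (hΨ ψ hψ')
      refine ⟨D (-a), -a, ?_, rfl⟩
      rw [hsupneg]
      simpa using ha
    · refine ⟨-(∑ i, (max (-ψ (EuclideanSpace.single i 1))
        (-ψ (-EuclideanSpace.single i 1))) • |f i|), ?_⟩
      rintro x ⟨b, hb, rfl⟩
      have h1 : -(D b) ≤ ∑ i, (max (-ψ (EuclideanSpace.single i 1))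
          (-ψ (-EuclideanSpace.single i 1))) • |f i| := by
        have h1' := hbnd (fun x => -ψ x) (-b) ((hsupneg ψ b).mp hb)
        rw [map_neg] at h1'
        exact h1'
      have h4 : (0:E) ≤ D b + ∑ i, (max (-ψ (EuclideanSpace.single i 1))
          (-ψ (-EuclideanSpace.single i 1))) • |f i| := by
        have := add_le_add_right h1 (D b)
        rwa [add_neg_cancel] at this
      have h6 : -(∑ i, (max (-ψ (EuclideanSpace.single i 1))
          (-ψ (-EuclideanSpace.single i 1))) • |f i|) ≤ D b := by
        have h5 := add_le_add_right h4 (-(∑ i, (max (-ψ (EuclideanSpace.single i 1))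
          (-ψ (-EuclideanSpace.single i 1))) • |f i|))
        calc -(∑ i, (max (-ψ (EuclideanSpace.single i 1))
              (-ψ (-EuclideanSpace.single i 1))) • |f i|)
            = -(∑ i, (max (-ψ (EuclideanSpace.single i 1))
              (-ψ (-EuclideanSpace.single i 1))) • |f i|) + 0 := by rw [add_zero]
          _ ≤ _ := h5
          _ = D b := by abel
      exact h6
  choose! T hT using hTex
  -- pointwise inequalities
  have hφh : ∀ φ ∈ Φ, ∀ x, h x ≤ φ x := fun φ hφ' x => (hrepΦ x).1 ⟨φ, hφ', rfl⟩
  have hψh : ∀ ψ ∈ Ψ, ∀ x, ψ x ≤ h x := fun ψ hψ' x => (hrepΨ x).1 ⟨ψ, hψ', rfl⟩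
  -- the sandwich link
  have key1 : ∀ ψ ∈ Ψ, ∀ φ ∈ Φ, ∀ tv sv : E, IsGLB (TT ψ) tv → IsLUB (SS φ) sv →
      tv ≤ sv := by
    intro ψ hψ' φ hφ' tv sv htv hsv
    obtain ⟨c, hcsub, hcmin⟩ := St13.exists_sandwich (hΦ φ hφ') (hΨ ψ hψ')
      (fun x => le_trans (hψh ψ hψ' x) (hφh φ hφ' x))
    have hc1 : D c ∈ SS φ := ⟨c, hcsub, rfl⟩
    have hc2 : D c ∈ TT ψ := ⟨c, fun x => hcmin x, rfl⟩
    exact le_trans (htv.1 hc2) (hsv.1 hc1)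
  -- the two outer bounds
  obtain ⟨φ₀, hφ₀⟩ := hΦne
  obtain ⟨ψ₀, hψ₀⟩ := hΨne
  have hUex : ∃ u, IsGLB {s : E | ∃ φ ∈ Φ, IsLUB (SS φ) s} u := by
    apply hDCinf
    · exact ⟨S φ₀, φ₀, hφ₀, hS φ₀ hφ₀⟩
    · refine ⟨T ψ₀, ?_⟩
      rintro s ⟨φ, hφ', hlub⟩
      exact key1 ψ₀ hψ₀ φ hφ' _ _ (hT ψ₀ hψ₀) hlub
  obtain ⟨u, hu⟩ := hUex
  have hVex : ∃ v, IsLUB {t : E | ∃ ψ ∈ Ψ, IsGLB (TT ψ) t} v := by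
    apply hDCsup
    · exact ⟨T ψ₀, ψ₀, hψ₀, hT ψ₀ hψ₀⟩
    · refine ⟨S φ₀, ?_⟩
      rintro t ⟨ψ, hψ', hglb⟩
      exact key1 ψ hψ' φ₀ hφ₀ _ _ hglb (hS φ₀ hφ₀)
  obtain ⟨v, hv⟩ := hVex
  have hvu : v ≤ u := by
    apply hu.2
    rintro s ⟨φ, hφ', hlub⟩
    apply hv.2
    rintro t ⟨ψ, hψ', hglb⟩
    exact key1 ψ hψ' φ hφ' _ _ hglb hlub
  have huv : u ≤ v := by
    by_cases hex : ∃ x₀ : EuclideanSpace ℝ (Fin n), x₀ ≠ 0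
    case neg =>
      push_neg at hex
      have hzero : ∀ a : EuclideanSpace ℝ (Fin n), D a = 0 := by
        intro a
        rw [hex a, map_zero]
      have hSS0 : ∀ φ ∈ Φ, SS φ = {(0:E)} := by
        intro φ hφ'
        apply Set.eq_of_subset_of_subset
        · rintro x ⟨a, _, rfl⟩
          rw [Set.mem_singleton_iff]
          exact hzero a
        · intro x hx
          rw [Set.mem_singleton_iff] at hx
          subst hx
          obtain ⟨a, ha⟩ := St13.subdiff_nonempty (hΦ φ hφ')
          exact ⟨a, ha, (hzero a).symm⟩
      have hTT0 : ∀ ψ ∈ Ψ, TT ψ = {(0:E)} := by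
        intro ψ hψ'
        apply Set.eq_of_subset_of_subset
        · rintro x ⟨b, _, rfl⟩
          rw [Set.mem_singleton_iff]
          exact hzero b
        · intro x hx
          rw [Set.mem_singleton_iff] at hx
          subst hx
          obtain ⟨a, ha⟩ := St13.subdiff_nonempty (hΨ ψ hψ')
          refine ⟨-a, (hsupneg ψ (-a)).mpr (by simpa using ha), (hzero (-a)).symm⟩
      have hU : {s : E | ∃ φ ∈ Φ, IsLUB (SS φ) s} = {(0:E)} := by
        ext s
        constructor
        · rintro ⟨φ, hφ', hlub⟩
          rw [hSS0 φ hφ'] at hlub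
          rw [Set.mem_singleton_iff]
          exact hlub.unique isLUB_singleton
        · intro hs
          rw [Set.mem_singleton_iff] at hs
          subst hs
          exact ⟨φ₀, hφ₀, by rw [hSS0 φ₀ hφ₀]; exact isLUB_singleton⟩
      have hV : {t : E | ∃ ψ ∈ Ψ, IsGLB (TT ψ) t} = {(0:E)} := by
        ext t
        constructor
        · rintro ⟨ψ, hψ', hglb⟩
          rw [hTT0 ψ hψ'] at hglb
          rw [Set.mem_singleton_iff]
          exact hglb.unique isGLB_singleton
        · intro hs
          rw [Set.mem_singleton_iff] at hs
          subst hs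
          exact ⟨ψ₀, hψ₀, by rw [hTT0 ψ₀ hψ₀]; exact isGLB_singleton⟩
      have hu0 : u = 0 := by
        rw [hU] at hu
        exact hu.unique isGLB_singleton
      have hv0 : v = 0 := by
        rw [hV] at hv
        exact hv.unique isLUB_singleton
      rw [hu0, hv0]
    case pos =>
      obtain ⟨x₀, hx₀⟩ := hex
      have hmain : ∀ ε : ℝ, 0 < ε → u - v ≤ (ε * (2 + n)) • e := by
        intro ε hε
        set K := Metric.sphere (0 : EuclideanSpace ℝ (Fin n)) 1 with hK
        have hnorm1 : ∀ y : EuclideanSpace ℝ (Fin n), y ≠ 0 → ‖y‖⁻¹ • y ∈ K := by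
          intro y hy
          rw [hK, mem_sphere_zero_iff_norm, norm_smul, norm_inv, norm_norm]
          exact inv_mul_cancel₀ (norm_ne_zero_iff.mpr hy)
        have hx₁ : ‖x₀‖⁻¹ • x₀ ∈ K := hnorm1 x₀ hx₀
        have hchoice : ∀ z : K, ∃ φ, φ ∈ Φ ∧ ∃ ψ, ψ ∈ Ψ ∧
            φ (z : EuclideanSpace ℝ (Fin n)) - ψ (z : EuclideanSpace ℝ (Fin n)) < 2*ε := by
          intro z
          obtain ⟨c1, hc1s, _, hlt1⟩ := (hrepΦ z).exists_between
            (lt_add_of_pos_right _ hε)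
          obtain ⟨φ, hφ', hc1⟩ := hc1s
          subst hc1
          obtain ⟨c2, hc2s, hlt2, _⟩ := (hrepΨ z).exists_between
            (sub_lt_self _ hε)
          obtain ⟨ψ, hψ', hc2⟩ := hc2s
          subst hc2
          exact ⟨φ, hφ', ψ, hψ', by linarith⟩
        choose φc hφc ψc hψc hsmall using hchoice
        set χ : K → EuclideanSpace ℝ (Fin n) → ℝ := fun z y => φc z y - ψc z y with hχ
        have hχsub : ∀ z, Sublinear (χ z) := by
          intro z
          constructor
          · intro x y
            have h1 := (hΦ _ (hφc z)).1 x y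
            have h2 := St13.superlinear_add (hΨ _ (hψc z)) x y
            simp only [hχ]
            linarith
          · intro c hc x
            simp only [hχ]
            rw [(hΦ _ (hφc z)).2 c hc x, St13.superlinear_smul (hΨ _ (hψc z)) hc x]
            ring
        have hχcont : ∀ z, Continuous (χ z) := fun z => St13.sublinear_continuous (hχsub z)
        have hKcomp : IsCompact K := isCompact_sphere 0 1
        have hUopen : ∀ z : K, IsOpen {y : EuclideanSpace ℝ (Fin n) | χ z y < 2*ε} :=
          fun z => isOpen_lt (hχcont z) continuous_const
        have hcov : K ⊆ ⋃ z : K, {y : EuclideanSpace ℝ (Fin n) | χ z y < 2*ε} := by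
          intro x hx
          exact Set.mem_iUnion.mpr ⟨⟨x, hx⟩, hsmall ⟨x, hx⟩⟩
        obtain ⟨J, hJcov⟩ := hKcomp.elim_finite_subcover _ hUopen hcov
        have hJne : J.Nonempty := by
          have := hJcov hx₁
          rw [Set.mem_iUnion₂] at this
          obtain ⟨z, hz, _⟩ := this
          exact ⟨z, hz⟩
        -- second covering: finite approximations of subdifferentials
        have hAex : ∀ z : K, ∃ A : Finset (EuclideanSpace ℝ (Fin n)), A.Nonempty ∧
            (∀ a ∈ A, a ∈ subdiff (χ z)) ∧
            ∀ y ∈ K, ∃ a ∈ A, χ z y < St13.dotR a y + ε := by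
          intro z
          have hat : ∀ x : K, ∃ a, a ∈ subdiff (χ z) ∧
              St13.dotR a (x : EuclideanSpace ℝ (Fin n)) = χ z x := by
            intro x
            obtain ⟨a, ha1, ha2⟩ := St13.exists_subdiff_attain (hχsub z)
              (x : EuclideanSpace ℝ (Fin n))
            exact ⟨a, ha1, ha2⟩
          choose av hav1 hav2 using hat
          have hWopen : ∀ x : K,
              IsOpen {y : EuclideanSpace ℝ (Fin n) | χ z y - St13.dotR (av x) y < ε} :=
            fun x => isOpen_lt ((hχcont z).sub (St13.dotR_continuous (av x))) continuous_const
          have hcov2 : K ⊆ ⋃ x : K,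
              {y : EuclideanSpace ℝ (Fin n) | χ z y - St13.dotR (av x) y < ε} := by
            intro y hy
            refine Set.mem_iUnion.mpr ⟨⟨y, hy⟩, ?_⟩
            show χ z ((⟨y, hy⟩ : K) : EuclideanSpace ℝ (Fin n)) -
              St13.dotR (av ⟨y, hy⟩) ((⟨y, hy⟩ : K) : EuclideanSpace ℝ (Fin n)) < ε
            rw [hav2 ⟨y, hy⟩]
            simpa using hε
          obtain ⟨Jx, hJx⟩ := hKcomp.elim_finite_subcover _ hWopen hcov2
          have hJxne : Jx.Nonempty := by
            have := hJx hx₁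
            rw [Set.mem_iUnion₂] at this
            obtain ⟨z', hz', _⟩ := this
            exact ⟨z', hz'⟩
          refine ⟨Jx.image av, hJxne.image av, ?_, ?_⟩
          · intro a ha
            obtain ⟨x, _, rfl⟩ := Finset.mem_image.mp ha
            exact hav1 x
          · intro y hy
            have h3 := hJx hy
            rw [Set.mem_iUnion₂] at h3
            obtain ⟨x, hxJ, hxlt⟩ := h3
            refine ⟨av x, Finset.mem_image_of_mem av hxJ, ?_⟩
            have h4 : χ z y - St13.dotR (av x) y < ε := hxlt
            linarith
        choose A hAne hAsub hAcov using hAex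
        set B : K → Finset (EuclideanSpace ℝ (Fin n)) :=
          fun z => ((A z) ×ˢ (St13.signs n)).image fun pr => pr.1 + ε • pr.2 with hB
        have hBne : ∀ z : K, (B z).Nonempty :=
          fun z => ((hAne z).product St13.signs_nonempty).image _
        set W : K → E := fun z => (B z).sup' (hBne z) fun b => D b with hW
        -- Step I : subdifferentials of χ z are dominated by W z
        have stepI : ∀ z : K, ∀ c ∈ subdiff (χ z), D c ≤ W z := by
          intro z c hc
          have hpw : ∀ y, St13.dotR c y ≤ (B z).sup' (hBne z) fun b => St13.dotR b y := by
            intro y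
            by_cases hy0 : y = 0
            · subst hy0
              obtain ⟨b, hb⟩ := hBne z
              have h1 := Finset.le_sup' (fun b => St13.dotR b (0 : EuclideanSpace ℝ (Fin n))) hb
              rw [St13.dotR_zero_right] at h1
              rw [St13.dotR_zero_right]
              exact h1
            · have ht : 0 < ‖y‖ := norm_pos_iff.mpr hy0
              have hyhK : ‖y‖⁻¹ • y ∈ K := hnorm1 y hy0
              obtain ⟨a, haA, halt⟩ := hAcov z (‖y‖⁻¹ • y) hyhK
              obtain ⟨sgn, hsgn, hsgneq⟩ := St13.exists_sign_dotR (‖y‖⁻¹ • y)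
              have h1 : St13.dotR c (‖y‖⁻¹ • y) ≤ χ z (‖y‖⁻¹ • y) := hc (‖y‖⁻¹ • y)
              have hsum1 : (1:ℝ) ≤ ∑ i, |(‖y‖⁻¹ • y : EuclideanSpace ℝ (Fin n)) i| := by
                have h2 := St13.norm_le_sum_abs (‖y‖⁻¹ • y)
                have h3 : ‖(‖y‖⁻¹ • y : EuclideanSpace ℝ (Fin n))‖ = 1 := by
                  rwa [hK, mem_sphere_zero_iff_norm] at hyhK
                linarith
              have h4 : St13.dotR c (‖y‖⁻¹ • y) ≤ St13.dotR (a + ε • sgn) (‖y‖⁻¹ • y) := by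
                rw [St13.dotR_add_left, St13.dotR_smul_left, hsgneq]
                have h5 : ε * 1 ≤ ε * ∑ i, |(‖y‖⁻¹ • y : EuclideanSpace ℝ (Fin n)) i| :=
                  mul_le_mul_of_nonneg_left hsum1 hε.le
                linarith
              have hsc : ∀ cc : EuclideanSpace ℝ (Fin n),
                  ‖y‖ * St13.dotR cc (‖y‖⁻¹ • y) = St13.dotR cc y := by
                intro cc
                rw [St13.dotR_smul_right, ← mul_assoc, mul_inv_cancel₀ ht.ne', one_mul]
              have h5 : St13.dotR c y ≤ St13.dotR (a + ε • sgn) y := by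
                rw [← hsc c, ← hsc (a + ε • sgn)]
                exact mul_le_mul_of_nonneg_left h4 ht.le
              refine le_trans h5 (Finset.le_sup' (fun b => St13.dotR b y) ?_)
              rw [hB]
              exact Finset.mem_image.mpr ⟨(a, sgn), Finset.mem_product.mpr ⟨haA, hsgn⟩, rfl⟩
          have hchull := St13.mem_convexHull_of_dotR_le (B z) (hBne z) c hpw
          obtain ⟨w, hw0, hw1, hwc⟩ := St13.rep_of_mem_convexHull hchull
          calc D c = ∑ b ∈ B z, w b • D b := by
                rw [← hwc, map_sum]
                apply Finset.sum_congr rfl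
                intro b _
                rw [map_smul]
            _ ≤ W z := St13.combo_le _ w hw0 hw1 _ _ (fun b hb => Finset.le_sup' (fun b => D b) hb)
        -- Step II : u ≤ v + W z for z ∈ J
        have stepII : ∀ z ∈ J, u ≤ v + W z := by
          intro z hz
          have hSz := hS (φc z) (hφc z)
          have hTz := hT (ψc z) (hψc z)
          have hu1 : u ≤ S (φc z) := hu.1 ⟨φc z, hφc z, hSz⟩
          have hv1 : T (ψc z) ≤ v := hv.1 ⟨ψc z, hψc z, hTz⟩
          have hST : S (φc z) ≤ T (ψc z) + W z := by
            have hlb : ∀ x ∈ TT (ψc z), S (φc z) - W z ≤ x := by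
              rintro x ⟨b, hb, rfl⟩
              have hub : ∀ xx ∈ SS (φc z), xx ≤ D b + W z := by
                rintro xx ⟨a, ha, rfl⟩
                have hab : (a - b) ∈ subdiff (χ z) := by
                  intro y
                  have h1 : St13.dotR (a-b) y = St13.dotR a y - St13.dotR b y :=
                    St13.dotR_sub_left a b y
                  have h2 : St13.dotR a y ≤ φc z y := ha y
                  have h3 : ψc z y ≤ St13.dotR b y := hb y
                  show St13.dotR (a-b) y ≤ χ z y
                  rw [h1]
                  simp only [hχ]
                  linarith
                have h4 := stepI z (a - b) hab
                rw [map_sub] at h4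
                show D a ≤ D b + W z
                have h5 := sub_le_iff_le_add.mp h4
                rwa [add_comm] at h5
              have h6 : S (φc z) ≤ D b + W z := hSz.2 hub
              exact sub_le_iff_le_add.mpr h6
            have h7 : S (φc z) - W z ≤ T (ψc z) := hTz.2 hlb
            exact sub_le_iff_le_add.mp h7
          calc u ≤ S (φc z) := hu1
            _ ≤ T (ψc z) + W z := hST
            _ ≤ v + W z := add_le_add_left hv1 (W z)
        have hinf : u - v ≤ J.inf' hJne W := by
          apply Finset.le_inf' hJne
          intro z hz
          have h8 := stepII z hz
          rw [add_comm] at h8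
          exact sub_le_iff_le_add.mpr h8
        -- Step III : the infimum of the W z is small
        have stepIII : J.inf' hJne W ≤ (ε * (2 + n)) • e := by
          have hsel : ∀ g : K → EuclideanSpace ℝ (Fin n), (∀ z ∈ J, g z ∈ B z) →
              (J.inf' hJne fun z => D (g z)) ≤ (ε * (2 + n)) • e := by
            intro g hg
            set q : EuclideanSpace ℝ (Fin n) → ℝ :=
              fun y => J.inf' hJne fun z => St13.dotR (g z) y with hq
            have hqsuper : Superlinear q := by
              show Sublinear (fun y => -q y)
              have heq : (fun y : EuclideanSpace ℝ (Fin n) => -q y) =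
                  fun y => J.sup' hJne fun z => St13.dotR (-(g z)) y := by
                funext y
                simp only [hq]
                rw [St13.neg_inf'_eq]
                apply Finset.sup'_congr hJne rfl
                intro z _
                rw [St13.dotR_neg_left]
              rw [heq]
              exact St13.sublinear_sup'_dotR J hJne _
            have hqle : ∀ y, q y ≤ (ε * (2 + n)) * ∑ i, |y i| := by
              intro y
              by_cases hy0 : y = 0
              · subst hy0
                obtain ⟨z, hz⟩ := hJne
                have h1 : q 0 ≤ St13.dotR (g z) 0 :=
                  Finset.inf'_le (fun z => St13.dotR (g z) (0 : EuclideanSpace ℝ (Fin n))) hz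
                rw [St13.dotR_zero_right] at h1
                have h2 : ∑ i, |(0 : EuclideanSpace ℝ (Fin n)) i| = 0 := by
                  simp
                rw [h2, mul_zero]
                exact h1
              · have ht : 0 < ‖y‖ := norm_pos_iff.mpr hy0
                have hyhK : ‖y‖⁻¹ • y ∈ K := hnorm1 y hy0
                have hcv := hJcov hyhK
                rw [Set.mem_iUnion₂] at hcv
                obtain ⟨z₀, hz₀J, hz₀lt⟩ := hcv
                have hχlt : χ z₀ (‖y‖⁻¹ • y) < 2*ε := hz₀lt
                obtain ⟨pr, hpr, hpreq⟩ := Finset.mem_image.mp (hg z₀ hz₀J)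
                obtain ⟨haA, hsS⟩ := Finset.mem_product.mp hpr
                have h3 : ‖(‖y‖⁻¹ • y : EuclideanSpace ℝ (Fin n))‖ = 1 := by
                  rwa [hK, mem_sphere_zero_iff_norm] at hyhK
                have hsum1 : (1:ℝ) ≤ ∑ i, |(‖y‖⁻¹ • y : EuclideanSpace ℝ (Fin n)) i| := by
                  have h2 := St13.norm_le_sum_abs (‖y‖⁻¹ • y)
                  linarith
                have hsumn : ∑ i, |(‖y‖⁻¹ • y : EuclideanSpace ℝ (Fin n)) i| ≤ (n:ℝ) := by
                  calc ∑ i, |(‖y‖⁻¹ • y : EuclideanSpace ℝ (Fin n)) i|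
                      ≤ ∑ _i : Fin n, (1:ℝ) := by
                        apply Finset.sum_le_sum
                        intro i _
                        have h9 := St13.abs_coord_le (‖y‖⁻¹ • y) i
                        rw [h3] at h9
                        exact h9
                    _ = n := by simp
                have hbound_yh : St13.dotR (g z₀) (‖y‖⁻¹ • y) ≤
                    2*ε + ε * ∑ i, |(‖y‖⁻¹ • y : EuclideanSpace ℝ (Fin n)) i| := by
                  rw [← hpreq, St13.dotR_add_left, St13.dotR_smul_left]
                  have h5 : St13.dotR pr.1 (‖y‖⁻¹ • y) ≤ χ z₀ (‖y‖⁻¹ • y) :=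
                    hAsub z₀ pr.1 haA (‖y‖⁻¹ • y)
                  have h6 : St13.dotR pr.2 (‖y‖⁻¹ • y) ≤
                      ∑ i, |(‖y‖⁻¹ • y : EuclideanSpace ℝ (Fin n)) i| :=
                    St13.dotR_sign_le pr.2 hsS (‖y‖⁻¹ • y)
                  have h7 : ε * St13.dotR pr.2 (‖y‖⁻¹ • y) ≤
                      ε * ∑ i, |(‖y‖⁻¹ • y : EuclideanSpace ℝ (Fin n)) i| :=
                    mul_le_mul_of_nonneg_left h6 hε.le
                  linarith
                have hqyh : q y ≤ ‖y‖ *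
                    (2*ε + ε * ∑ i, |(‖y‖⁻¹ • y : EuclideanSpace ℝ (Fin n)) i|) := by
                  have h8 : q y ≤ St13.dotR (g z₀) y :=
                    Finset.inf'_le (fun z => St13.dotR (g z) y) hz₀J
                  have h9 : ‖y‖ * St13.dotR (g z₀) (‖y‖⁻¹ • y) = St13.dotR (g z₀) y := by
                    rw [St13.dotR_smul_right, ← mul_assoc, mul_inv_cancel₀ ht.ne', one_mul]
                  rw [← h9] at h8
                  exact le_trans h8 (mul_le_mul_of_nonneg_left hbound_yh ht.le)
                have habs : ∑ i, |y i| =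
                    ‖y‖ * ∑ i, |(‖y‖⁻¹ • y : EuclideanSpace ℝ (Fin n)) i| := by
                  rw [Finset.mul_sum]
                  apply Finset.sum_congr rfl
                  intro i _
                  have h9 : y i = ‖y‖ * (‖y‖⁻¹ • y : EuclideanSpace ℝ (Fin n)) i := by
                    rw [PiLp.smul_apply, smul_eq_mul, ← mul_assoc, mul_inv_cancel₀ ht.ne',
                      one_mul]
                  rw [h9, abs_mul, abs_of_nonneg (norm_nonneg y)]
                rw [habs]
                calc q y ≤ ‖y‖ *
                      (2*ε + ε * ∑ i, |(‖y‖⁻¹ • y : EuclideanSpace ℝ (Fin n)) i|) := hqyh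
                  _ ≤ ‖y‖ * ((ε * (2 + n)) *
                      ∑ i, |(‖y‖⁻¹ • y : EuclideanSpace ℝ (Fin n)) i|) := by
                      apply mul_le_mul_of_nonneg_left _ (norm_nonneg y)
                      have hn1 : (1:ℝ) ≤ (n:ℝ) := le_trans hsum1 hsumn
                      have hSig0 : (0:ℝ) ≤ ∑ i, |(‖y‖⁻¹ • y : EuclideanSpace ℝ (Fin n)) i| :=
                        le_trans zero_le_one hsum1
                      nlinarith [mul_nonneg hε.le (sub_nonneg.mpr hsum1),
                        mul_nonneg (mul_nonneg hε.le hSig0) (sub_nonneg.mpr hn1)]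
                  _ = ε * (2 + n) *
                      (‖y‖ * ∑ i, |(‖y‖⁻¹ • y : EuclideanSpace ℝ (Fin n)) i|) := by ring
            obtain ⟨cv, hcvsub, hcvmin⟩ := St13.exists_sandwich
              (St13.sublinear_absSum (ε * (2 + n)) (by positivity)) hqsuper hqle
            have hcvE : D cv ≤ (ε * (2 + n)) • e := by
              have habs1 : ∀ i : Fin n,
                  ∑ j, |(EuclideanSpace.single i (1:ℝ) : EuclideanSpace ℝ (Fin n)) j| = 1 := by
                intro i
                have h1 : ∀ j, |(EuclideanSpace.single i (1:ℝ) : EuclideanSpace ℝ (Fin n)) j| =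
                    if j = i then (1:ℝ) else 0 := by
                  intro j
                  rw [EuclideanSpace.single_apply]
                  split <;> simp
                rw [Finset.sum_congr rfl (fun j _ => h1 j)]
                simp
              have hcoord : ∀ i, |cv i| ≤ ε * (2 + n) := by
                intro i
                rw [abs_le]
                constructor
                · have h1 : St13.dotR cv (-EuclideanSpace.single i 1) ≤
                      (ε * (2 + n)) * ∑ j,
                      |(-EuclideanSpace.single i (1:ℝ) : EuclideanSpace ℝ (Fin n)) j| :=
                    hcvsub _
                  have h2 : St13.dotR cv (-EuclideanSpace.single i 1) = -(cv i) := by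
                    rw [St13.dotR_neg_right, St13.dotR_single]
                  have h3 : ∑ j, |(-EuclideanSpace.single i (1:ℝ) :
                      EuclideanSpace ℝ (Fin n)) j| = 1 := by
                    have h4 : ∀ j, |(-EuclideanSpace.single i (1:ℝ) :
                        EuclideanSpace ℝ (Fin n)) j| =
                        |(EuclideanSpace.single i (1:ℝ) : EuclideanSpace ℝ (Fin n)) j| := by
                      intro j
                      rw [PiLp.neg_apply, abs_neg]
                    rw [Finset.sum_congr rfl (fun j _ => h4 j)]
                    exact habs1 i
                  rw [h2, h3, mul_one] at h1
                  linarith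
                · have h1 : St13.dotR cv (EuclideanSpace.single i 1) ≤
                      (ε * (2 + n)) * ∑ j,
                      |(EuclideanSpace.single i (1:ℝ) : EuclideanSpace ℝ (Fin n)) j| :=
                    hcvsub _
                  rw [St13.dotR_single, habs1 i, mul_one] at h1
                  exact h1
              rw [hDA]
              have hterm : ∀ i, cv i • f i ≤ (ε * (2+n)) • |f i| := by
                intro i
                calc cv i • f i ≤ |cv i| • |f i| := St13.smul_le_abs_smul_abs _ _
                  _ ≤ (ε * (2+n)) • |f i| :=
                    St13.smul_le_smul_scalar (hcoord i) (abs_nonneg _)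
              calc ∑ i, cv i • f i ≤ ∑ i, (ε * (2+n)) • |f i| :=
                    St13.my_sum_le_sum _ _ _ (fun i _ => hterm i)
                _ = (ε * (2+n)) • e := by rw [hedef, Finset.smul_sum]
            have hmcv : (J.inf' hJne fun z => D (g z)) ≤ D cv := by
              set Bneg := J.image (fun z => -(g z)) with hBneg
              have hBnegne : Bneg.Nonempty := hJne.image _
              have hneg : ∀ y, St13.dotR (-cv) y ≤ Bneg.sup' hBnegne fun b => St13.dotR b y := by
                intro y
                have h1 : -(St13.dotR cv y) ≤ -(q y) := neg_le_neg (hcvmin y)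
                have h2 : -(q y) = J.sup' hJne fun z => -(St13.dotR (g z) y) := by
                  simp only [hq]
                  rw [St13.neg_inf'_eq]
                have h3 : (Bneg.sup' hBnegne fun b => St13.dotR b y)
                    = J.sup' hJne fun z => -(St13.dotR (g z) y) := by
                  apply le_antisymm
                  · apply Finset.sup'_le
                    intro b hb
                    rw [hBneg] at hb
                    obtain ⟨z, hzJ, rfl⟩ := Finset.mem_image.mp hb
                    rw [St13.dotR_neg_left]
                    exact Finset.le_sup' (fun z => -(St13.dotR (g z) y)) hzJ
                  · apply Finset.sup'_le
                    intro z hzJ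
                    have hmem : -(g z) ∈ Bneg := by
                      rw [hBneg]
                      exact Finset.mem_image_of_mem _ hzJ
                    have := Finset.le_sup' (fun b => St13.dotR b y) hmem
                    rw [St13.dotR_neg_left] at this
                    exact this
                rw [St13.dotR_neg_left, h3, ← h2]
                exact h1
              have hchull2 := St13.mem_convexHull_of_dotR_le Bneg hBnegne (-cv) hneg
              obtain ⟨w, hw0, hw1, hwc⟩ := St13.rep_of_mem_convexHull hchull2
              have h4 : D (-cv) ≤ -(J.inf' hJne fun z => D (g z)) := by
                have h5 : D (-cv) = ∑ b ∈ Bneg, w b • D b := by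
                  rw [← hwc, map_sum]
                  apply Finset.sum_congr rfl
                  intro b _
                  rw [map_smul]
                rw [h5]
                apply St13.combo_le _ w hw0 hw1
                intro b hb
                rw [hBneg] at hb
                obtain ⟨z, hzJ, rfl⟩ := Finset.mem_image.mp hb
                have h6 : (J.inf' hJne fun z => D (g z)) ≤ D (g z) :=
                  Finset.inf'_le (fun z => D (g z)) hzJ
                rw [map_neg]
                exact St13.neg_antitone h6
              rw [map_neg] at h4
              have h7 := St13.neg_antitone h4
              simpa using h7
            exact le_trans hmcv hcvE
          have := St13.inf'_sup'_le_of_selections J hJne B hBne (fun b => D b)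
            ((ε * (2 + n)) • e) hsel
          exact this
        exact le_trans hinf stepIII
      have hwe : ∀ δ : ℝ, 0 < δ → u - v ≤ δ • e := by
        intro δ hδ
        have h2n : (0:ℝ) < 2 + n := by positivity
        have := hmain (δ / (2 + n)) (by positivity)
        rwa [div_mul_cancel₀ δ h2n.ne'] at this
      have hfin := St13.le_zero_of_forall_smul hDCsup e he0 (u - v) hwe
      exact sub_nonpos.mp hfin
  exact ⟨u, v, hu, hv, le_antisymm huv hvu⟩
end
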